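/- arXiv:2203.02410 — 14 statements merged into one kernel-verified Lean document; each statement's English description precedes it below -/
import Mathlib

section
/- Let C₁, …, C_m ⊆ ℝⁿ be nonempty closed convex sets, let α₁, …, α_m be nonnegative scalars with Σᵢ αᵢ = 1, let P̄ = Σᵢ αᵢ P_{Cᵢ}, and define g : ℝⁿ → ℝ by g(x) = Σᵢ αᵢ · dist(x, Cᵢ)². Then a point x ∈ ℝⁿ satisfies P̄(x) = x if and only if x is a global minimizer of g over ℝⁿ. -/
/-- `P` is the orthogonal projection onto `C`: for each `x`, `P x ∈ C` and `P x`
minimizes the distance from `x` to points of `C`. -/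
def IsProjOn {n : ℕ} (C : Set (EuclideanSpace ℝ (Fin n)))
    (P : EuclideanSpace ℝ (Fin n) → EuclideanSpace ℝ (Fin n)) : Prop :=
  ∀ x, P x ∈ C ∧ ∀ y ∈ C, ‖x - P x‖ ≤ ‖x - y‖

open RealInnerProductSpace in
/-- Variational inequality for a (pointwise) projection onto a convex set. -/
lemma proj_var_ineq {E : Type*} [NormedAddCommGroup E] [InnerProductSpace ℝ E]
    {C : Set E} (hconv : Convex ℝ C) {x p : E} (hp : p ∈ C)
    (hmin : ∀ y ∈ C, ‖x - p‖ ≤ ‖x - y‖) :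
    ∀ w ∈ C, ⟪x - p, w - p⟫ ≤ 0 := by
  rw [← norm_eq_iInf_iff_real_inner_le_zero hconv hp]
  haveI : Nonempty C := ⟨⟨p, hp⟩⟩
  refine le_antisymm ?_ ?_
  · exact le_ciInf fun w => hmin w w.2
  · exact ciInf_le ⟨0, fun _ ⟨_, h⟩ => h ▸ norm_nonneg _⟩ (⟨p, hp⟩ : C)

open RealInnerProductSpace in
/-- Subgradient inequality for the squared distance to a convex set. -/
lemma sq_dist_subgrad {E : Type*} [NormedAddCommGroup E] [InnerProductSpace ℝ E]
    {C : Set E} (hconv : Convex ℝ C) {x p z q : E} (hp : p ∈ C) (hq : q ∈ C)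
    (hmin : ∀ y ∈ C, ‖x - p‖ ≤ ‖x - y‖)
    (hminz : ∀ y ∈ C, ‖z - q‖ ≤ ‖z - y‖) :
    ‖x - p‖ ^ 2 + 2 * ⟪x - p, z - x⟫ ≤ ‖z - q‖ ^ 2 := by
  set v := x - p with hv
  set a := ⟪v, z - x⟫ with ha
  have hineq : a + ‖v‖ ^ 2 ≤ ‖v‖ * ‖z - q‖ := by
    have h1 : ⟪v, q - p⟫ ≤ 0 := proj_var_ineq hconv hp hmin q hq
    have h2 : ⟪v, z - q⟫ ≤ ‖v‖ * ‖z - q‖ := real_inner_le_norm _ _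
    have h3 : ⟪v, z - q⟫ = a + ‖v‖ ^ 2 - ⟪v, q - p⟫ := by
      have : (z - q) = (z - x) + v - (q - p) := by rw [hv]; abel
      rw [this, inner_sub_right, inner_add_right, real_inner_self_eq_norm_sq]
    linarith
  rcases le_or_gt (a + ‖v‖ ^ 2) 0 with h | h
  · nlinarith [sq_nonneg (‖z - q‖), sq_nonneg ‖v‖]
  · rcases eq_or_lt_of_le (norm_nonneg v) with hb0 | hb0
    · exfalso
      rw [← hb0] at hineq h
      simp at hineq h
      linarith
    · nlinarith [mul_le_mul hineq hineq h.le
        (mul_nonneg (norm_nonneg v) (norm_nonneg (z - q))),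
        sq_nonneg a, mul_pos hb0 hb0]

/-- A point is a fixed point of the convex combination `P̄ = Σ αᵢ P_{Cᵢ}` of orthogonal
projections iff it is a global minimizer of `g x = Σ αᵢ · dist(x, Cᵢ)²`. -/
theorem fixedPoint_iff_minimizer {n m : ℕ}
    (C : Fin m → Set (EuclideanSpace ℝ (Fin n)))
    (hC : ∀ i, (C i).Nonempty ∧ IsClosed (C i) ∧ Convex ℝ (C i))
    (P : Fin m → EuclideanSpace ℝ (Fin n) → EuclideanSpace ℝ (Fin n))
    (hP : ∀ i, IsProjOn (C i) (P i))
    (α : Fin m → ℝ) (hα : ∀ i, 0 ≤ α i) (hsum : ∑ i, α i = 1)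
    (g : EuclideanSpace ℝ (Fin n) → ℝ)
    (hg : ∀ x, g x = ∑ i, α i * ‖x - P i x‖ ^ 2)
    (x : EuclideanSpace ℝ (Fin n)) :
    (∑ i, α i • P i x) = x ↔ ∀ z, g x ≤ g z := by
  constructor
  · intro hfix z
    have key : ∀ i, α i * (‖x - P i x‖ ^ 2 + 2 * @inner ℝ _ _ (x - P i x) (z - x))
        ≤ α i * ‖z - P i z‖ ^ 2 := by
      intro i
      exact mul_le_mul_of_nonneg_left
        (sq_dist_subgrad (hC i).2.2 ((hP i) x).1 ((hP i) z).1 ((hP i) x).2 ((hP i) z).2)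
        (hα i)
    have hsum' : ∑ i, α i * (‖x - P i x‖ ^ 2 + 2 * @inner ℝ _ _ (x - P i x) (z - x))
        ≤ ∑ i, α i * ‖z - P i z‖ ^ 2 := Finset.sum_le_sum fun i _ => key i
    have hzero : ∑ i, α i * @inner ℝ _ _ (x - P i x) (z - x) = 0 := by
      have : ∑ i, α i * @inner ℝ _ _ (x - P i x) (z - x)
          = @inner ℝ _ _ (∑ i, α i • (x - P i x)) (z - x) := by
        rw [sum_inner]
        exact Finset.sum_congr rfl fun i _ => (real_inner_smul_left _ _ _).symm
      rw [this]
      have : (∑ i, α i • (x - P i x)) = 0 := by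
        have : ∑ i, α i • (x - P i x) = (∑ i, α i) • x - ∑ i, α i • P i x := by
          rw [Finset.sum_smul]
          rw [← Finset.sum_sub_distrib]
          exact Finset.sum_congr rfl fun i _ => smul_sub _ _ _
        rw [this, hsum, one_smul, hfix, sub_self]
      rw [this, inner_zero_left]
    rw [hg x, hg z]
    calc ∑ i, α i * ‖x - P i x‖ ^ 2
        = ∑ i, α i * (‖x - P i x‖ ^ 2 + 2 * @inner ℝ _ _ (x - P i x) (z - x)) := by
          rw [← sub_eq_zero, ← Finset.sum_sub_distrib]
          have : ∑ i, (α i * ‖x - P i x‖ ^ 2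
              - α i * (‖x - P i x‖ ^ 2 + 2 * @inner ℝ _ _ (x - P i x) (z - x)))
              = -2 * ∑ i, α i * @inner ℝ _ _ (x - P i x) (z - x) := by
            rw [Finset.mul_sum]; exact Finset.sum_congr rfl fun i _ => by ring
          rw [this, hzero, mul_zero]
      _ ≤ ∑ i, α i * ‖z - P i z‖ ^ 2 := hsum'
  · intro hmin
    set u := (∑ i, α i • P i x) - x with hu
    have hip : ∑ i, α i * @inner ℝ _ _ (x - P i x) u = -‖u‖ ^ 2 := by
      have h1 : ∑ i, α i * @inner ℝ _ _ (x - P i x) u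
          = @inner ℝ _ _ (∑ i, α i • (x - P i x)) u := by
        rw [sum_inner]
        exact Finset.sum_congr rfl fun i _ => (real_inner_smul_left _ _ _).symm
      have h2 : (∑ i, α i • (x - P i x)) = -u := by
        have : ∑ i, α i • (x - P i x) = (∑ i, α i) • x - ∑ i, α i • P i x := by
          rw [Finset.sum_smul, ← Finset.sum_sub_distrib]
          exact Finset.sum_congr rfl fun i _ => smul_sub _ _ _
        rw [this, hsum, one_smul, hu]; abel
      rw [h1, h2, inner_neg_left, real_inner_self_eq_norm_sq]
    have hub : g (x + u) ≤ g x - ‖u‖ ^ 2 := by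
      rw [hg (x + u), hg x]
      have step : ∀ i, α i * ‖x + u - P i (x + u)‖ ^ 2 ≤ α i * ‖x + u - P i x‖ ^ 2 := by
        intro i
        have h := ((hP i) (x + u)).2 (P i x) ((hP i) x).1
        exact mul_le_mul_of_nonneg_left
          (by nlinarith [norm_nonneg (x + u - P i (x + u)), norm_nonneg (x + u - P i x)])
          (hα i)
      calc ∑ i, α i * ‖x + u - P i (x + u)‖ ^ 2
          ≤ ∑ i, α i * ‖x + u - P i x‖ ^ 2 := Finset.sum_le_sum fun i _ => step i
        _ = (∑ i, α i * ‖x - P i x‖ ^ 2) - ‖u‖ ^ 2 := by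
            have expand : ∀ i, α i * ‖x + u - P i x‖ ^ 2
                = α i * ‖x - P i x‖ ^ 2 + 2 * (α i * @inner ℝ _ _ (x - P i x) u)
                  + α i * ‖u‖ ^ 2 := by
              intro i
              have : (x + u - P i x) = (x - P i x) + u := by abel
              rw [this]
              simp only [← real_inner_self_eq_norm_sq]
              rw [inner_add_add_self, real_inner_comm u (x - P i x)]
              ring
            rw [Finset.sum_congr rfl fun i _ => expand i]
            rw [Finset.sum_add_distrib, Finset.sum_add_distrib, ← Finset.mul_sum, hip,
              ← Finset.sum_mul, hsum]
            ring
    have h0 : g x ≤ g (x + u) := hmin (x + u)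
    have : ‖u‖ ^ 2 ≤ 0 := by linarith
    have hu0 : u = 0 := by
      have := norm_nonneg u
      have : ‖u‖ = 0 := by nlinarith
      simpa using this
    rw [← sub_eq_zero]; exact hu0
end

section
/- Let C₁, …, C_m ⊆ ℝⁿ be nonempty closed convex sets, let α₁, …, α_m be strictly positive scalars with Σᵢ αᵢ = 1, and let P̄ = Σᵢ αᵢ P_{Cᵢ}. If C = ∩ᵢⁿ Cᵢ is nonempty, then the fixed point set {x ∈ ℝⁿ : P̄(x) = x} equals C. -/
open RealInnerProductSpace
set_option maxHeartbeats 1000000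


/-- Variational inequality for a projection onto a convex set. -/
lemma proj_inner_le {n : ℕ} {C : Set (EuclideanSpace ℝ (Fin n))}
    (hconv : Convex ℝ C)
    {P : EuclideanSpace ℝ (Fin n) → EuclideanSpace ℝ (Fin n)}
    (hP : IsProjOn C P) (x : EuclideanSpace ℝ (Fin n)) :
    ∀ y ∈ C, ⟪x - P x, y - P x⟫ ≤ 0 := by
  have hmem := (hP x).1
  have hmin := (hP x).2
  have : Nonempty C := ⟨⟨P x, hmem⟩⟩
  have hbdd : BddBelow (Set.range fun w : C => ‖x - (w : EuclideanSpace ℝ (Fin n))‖) := by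
    refine ⟨0, ?_⟩
    rintro y ⟨w, rfl⟩
    exact norm_nonneg _
  have heq : ‖x - P x‖ = ⨅ w : C, ‖x - w‖ := by
    refine le_antisymm (le_ciInf fun w => hmin w w.2) ?_
    exact ciInf_le hbdd (⟨P x, hmem⟩ : C)
  exact (norm_eq_iInf_iff_real_inner_le_zero hconv hmem).1 heq

/-- Pythagoras-type inequality for projections. -/
lemma proj_sq_ineq {n : ℕ} {C : Set (EuclideanSpace ℝ (Fin n))}
    (hconv : Convex ℝ C)
    {P : EuclideanSpace ℝ (Fin n) → EuclideanSpace ℝ (Fin n)}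
    (hP : IsProjOn C P) (x : EuclideanSpace ℝ (Fin n))
    {z : EuclideanSpace ℝ (Fin n)} (hz : z ∈ C) :
    ‖x - P x‖ ^ 2 + ‖P x - z‖ ^ 2 ≤ ‖x - z‖ ^ 2 := by
  have h := proj_inner_le hconv hP x z hz
  have hid : x - z = (x - P x) + (P x - z) := by abel
  have : ‖x - z‖ ^ 2 = ‖x - P x‖ ^ 2 + 2 * ⟪x - P x, P x - z⟫ + ‖P x - z‖ ^ 2 := by
    rw [hid, ← real_inner_self_eq_norm_sq, ← real_inner_self_eq_norm_sq,
      ← real_inner_self_eq_norm_sq, inner_add_add_self]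
    rw [real_inner_comm (P x - z) (x - P x)]
    ring
  have h2 : ⟪x - P x, P x - z⟫ = - ⟪x - P x, z - P x⟫ := by
    rw [← inner_neg_right]; congr 1; abel
  nlinarith [h]

/-- If the intersection `C = ∩ᵢ Cᵢ` is nonempty and all weights are strictly positive,
then the fixed point set of the convex combination `P̄ = Σ αᵢ P_{Cᵢ}` equals `C`. -/
theorem fixedPointSet_eq_inter {n m : ℕ}
    (C : Fin m → Set (EuclideanSpace ℝ (Fin n)))
    (hC : ∀ i, (C i).Nonempty ∧ IsClosed (C i) ∧ Convex ℝ (C i))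
    (P : Fin m → EuclideanSpace ℝ (Fin n) → EuclideanSpace ℝ (Fin n))
    (hP : ∀ i, IsProjOn (C i) (P i))
    (α : Fin m → ℝ) (hα : ∀ i, 0 < α i) (hsum : ∑ i, α i = 1)
    (hinter : (⋂ i, C i).Nonempty) :
    {x : EuclideanSpace ℝ (Fin n) | (∑ i, α i • P i x) = x} = ⋂ i, C i := by
  obtain ⟨z, hz⟩ := hinter
  ext x
  simp only [Set.mem_setOf_eq, Set.mem_iInter]
  constructor
  · intro hx
    -- key: for each i, ‖x - P i x‖² + ‖P i x - z‖² ≤ ‖x - z‖²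
    have hzi : ∀ i, z ∈ C i := fun i => Set.mem_iInter.1 hz i
    have key : ∀ i, ‖x - P i x‖ ^ 2 + ‖P i x - z‖ ^ 2 ≤ ‖x - z‖ ^ 2 :=
      fun i => proj_sq_ineq (hC i).2.2 (hP i) x (hzi i)
    -- x - z = ∑ αᵢ • (P i x - z)
    have hxz : x - z = ∑ i, α i • (P i x - z) := by
      simp only [smul_sub, Finset.sum_sub_distrib, ← Finset.sum_smul, hsum, one_smul, hx]
    have h1 : ‖x - z‖ ≤ ∑ i, α i * ‖P i x - z‖ := by
      rw [hxz]
      calc ‖∑ i, α i • (P i x - z)‖ ≤ ∑ i, ‖α i • (P i x - z)‖ := norm_sum_le _ _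
        _ = ∑ i, α i * ‖P i x - z‖ := by
            refine Finset.sum_congr rfl fun i _ => ?_
            rw [norm_smul, Real.norm_eq_abs, abs_of_pos (hα i)]
    have h2 : (∑ i, α i * ‖P i x - z‖) ^ 2 ≤ ∑ i, α i * ‖P i x - z‖ ^ 2 :=
      Real.pow_arith_mean_le_arith_mean_pow Finset.univ α (fun i => ‖P i x - z‖)
        (fun i _ => (hα i).le) hsum (fun i _ => norm_nonneg _) 2
    have h3 : ∑ i, α i * ‖P i x - z‖ ^ 2 ≤ ∑ i, α i * (‖x - z‖ ^ 2 - ‖x - P i x‖ ^ 2) := by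
      refine Finset.sum_le_sum fun i _ => ?_
      have := key i
      nlinarith [(hα i).le]
    have h4 : ∑ i, α i * (‖x - z‖ ^ 2 - ‖x - P i x‖ ^ 2)
        = ‖x - z‖ ^ 2 - ∑ i, α i * ‖x - P i x‖ ^ 2 := by
      simp only [mul_sub, Finset.sum_sub_distrib, ← Finset.sum_mul, hsum, one_mul]
    have h5 : ‖x - z‖ ^ 2 ≤ (∑ i, α i * ‖P i x - z‖) ^ 2 := by
      have := norm_nonneg (x - z)
      nlinarith [h1]
    have h6 : ∑ i, α i * ‖x - P i x‖ ^ 2 ≤ 0 := by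
      have := h5.trans (h2.trans (h3.trans_eq h4))
      linarith
    have h7 : ∀ i, α i * ‖x - P i x‖ ^ 2 = 0 := by
      intro i
      have hle : ∀ j ∈ Finset.univ, (0:ℝ) ≤ α j * ‖x - P j x‖ ^ 2 :=
        fun j _ => mul_nonneg (hα j).le (by positivity)
      have hge : 0 ≤ ∑ i, α i * ‖x - P i x‖ ^ 2 := Finset.sum_nonneg hle
      have hsum0 : ∑ i, α i * ‖x - P i x‖ ^ 2 = 0 := le_antisymm h6 hge
      exact (Finset.sum_eq_zero_iff_of_nonneg hle).1 hsum0 i (Finset.mem_univ i)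
    intro i
    have h0 : α i * ‖x - P i x‖ ^ 2 = 0 := h7 i
    have hsq : ‖x - P i x‖ ^ 2 = 0 := by
      rcases mul_eq_zero.1 h0 with h | h
      · exact absurd h (hα i).ne'
      · exact h
    have hnorm : ‖x - P i x‖ = 0 := by
      nlinarith [norm_nonneg (x - P i x)]
    have hPx : P i x = x := (sub_eq_zero.1 (norm_eq_zero.1 hnorm)).symm
    exact hPx ▸ (hP i x).1
  · intro hx
    have hfix : ∀ i, P i x = x := by
      intro i
      have h := (hP i x).2 x (hx i)
      simp only [sub_self, norm_zero] at h
      have : ‖x - P i x‖ = 0 := le_antisymm h (norm_nonneg _)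
      have := norm_eq_zero.1 this
      have : x = P i x := by rwa [sub_eq_zero] at this
      exact this.symm
    simp only [hfix, ← Finset.sum_smul, hsum, one_smul]
end

section
/- Let A, B ⊆ ℝⁿ be nonempty closed convex sets and let D = {(x, y) ∈ A × B : ‖x − y‖ = dist(A, B)}, where dist(A, B) = inf{‖a − b‖ : a ∈ A, b ∈ B}. Then for all (x, y), (x', y') ∈ D it holds that x − y = x' − y'. -/
/-- Any two pairs of points of closed convex sets `A, B` realizing the distance
`dist(A, B) = inf {‖a − b‖ : a ∈ A, b ∈ B}` have the same difference. -/
theorem diff_eq_of_realize_dist {n : ℕ}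
    (A B : Set (EuclideanSpace ℝ (Fin n)))
    (hAne : A.Nonempty) (hAcl : IsClosed A) (hAcv : Convex ℝ A)
    (hBne : B.Nonempty) (hBcl : IsClosed B) (hBcv : Convex ℝ B)
    (x y x' y' : EuclideanSpace ℝ (Fin n))
    (hx : x ∈ A) (hy : y ∈ B) (hx' : x' ∈ A) (hy' : y' ∈ B)
    (hd : ‖x - y‖ = sInf {d : ℝ | ∃ a ∈ A, ∃ b ∈ B, d = ‖a - b‖})
    (hd' : ‖x' - y'‖ = sInf {d : ℝ | ∃ a ∈ A, ∃ b ∈ B, d = ‖a - b‖}) :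
    x - y = x' - y' := by
  set S : Set ℝ := {d : ℝ | ∃ a ∈ A, ∃ b ∈ B, d = ‖a - b‖} with hS
  set m : ℝ := sInf S with hm
  have hbdd : BddBelow S := by
    refine ⟨0, fun d hd => ?_⟩
    obtain ⟨a, _, b, _, rfl⟩ := hd
    positivity
  -- midpoints
  have hxm : (1/2 : ℝ) • x + (1/2 : ℝ) • x' ∈ A :=
    hAcv hx hx' (by norm_num) (by norm_num) (by norm_num)
  have hym : (1/2 : ℝ) • y + (1/2 : ℝ) • y' ∈ B :=
    hBcv hy hy' (by norm_num) (by norm_num) (by norm_num)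
  have hmem : ‖((1/2 : ℝ) • x + (1/2 : ℝ) • x') - ((1/2 : ℝ) • y + (1/2 : ℝ) • y')‖ ∈ S :=
    ⟨_, hxm, _, hym, rfl⟩
  have hle : m ≤ ‖((1/2 : ℝ) • x + (1/2 : ℝ) • x') - ((1/2 : ℝ) • y + (1/2 : ℝ) • y')‖ :=
    csInf_le hbdd hmem
  set u := x - y
  set v := x' - y'
  have hmid : ((1/2 : ℝ) • x + (1/2 : ℝ) • x') - ((1/2 : ℝ) • y + (1/2 : ℝ) • y')
      = (1/2 : ℝ) • (u + v) := by
    simp only [u, v, smul_add, smul_sub]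
    abel
  have hmnn : (0 : ℝ) ≤ m := hd ▸ norm_nonneg _
  by_contra hne
  have huv : u - v ≠ 0 := sub_ne_zero_of_ne hne
  have hpar := parallelogram_law_with_norm ℝ u v
  have h1 : ‖u‖ = m := hd
  have h2 : ‖v‖ = m := hd'
  have hlt : ‖u + v‖ ^ 2 < (2 * m) ^ 2 := by
    nlinarith [norm_pos_iff.2 huv, sq_nonneg (‖u - v‖), norm_nonneg (u - v)]
  have hlt2 : ‖u + v‖ < 2 * m := by
    nlinarith [norm_nonneg (u + v)]
  have : ‖((1/2 : ℝ) • x + (1/2 : ℝ) • x') - ((1/2 : ℝ) • y + (1/2 : ℝ) • y')‖ < m := by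
    rw [hmid, norm_smul]
    simp only [Real.norm_eq_abs]
    rw [abs_of_pos (by norm_num : (0:ℝ) < 1/2)]
    linarith
  linarith
end

section
/- Let A, B ⊆ ℝⁿ be nonempty closed convex sets and let D = {(x, y) ∈ A × B : ‖x − y‖ = dist(A, B)}, where dist(A, B) = inf{‖a − b‖ : a ∈ A, b ∈ B}. If (x, y) ∈ D, α ∈ (0, 1) and w = (1 − α)x + αy, then P_A(w) = x and P_B(w) = y. -/
/-!
If `(x, y)` realizes `dist(A, B)`, then `x` is the point of `A` nearest to `y`, so by the
variational inequality `⟪y - x, a - x⟫ ≤ 0` for all `a ∈ A`. Since `w - x = α • (y - x)` with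
`α ≥ 0`, the same inequality holds with `w` in place of `y`, and it forces every point of `A` at
least as close to `w` as `x` to be `x` itself. Symmetrically, `w - y = (1 - α) • (x - y)` gives
`P_B(w) = y`.
-/

open RealInnerProductSpace

section InnerProductSpace

variable {E : Type*} [NormedAddCommGroup E] [InnerProductSpace ℝ E]

theorem real_inner_sub_nonpos_of_isMinOn_norm_sub {C : Set E} (hC : Convex ℝ C) {u x : E}
    (hx : x ∈ C) (hmin : IsMinOn (fun a => ‖u - a‖) C x) : ∀ a ∈ C, ⟪u - x, a - x⟫ ≤ 0 :=
  (norm_eq_iInf_iff_real_inner_le_zero hC hx).mp (hmin.iInf_eq hx).symm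

theorem eq_of_norm_sub_le_of_real_inner_sub_nonpos {u x a : E} (hle : ‖u - a‖ ≤ ‖u - x‖)
    (hinner : ⟪u - x, a - x⟫ ≤ 0) : a = x := by
  have hexpand : ‖u - a‖ ^ 2 = ‖u - x‖ ^ 2 - 2 * ⟪u - x, a - x⟫ + ‖a - x‖ ^ 2 := by
    rw [← norm_sub_sq_real, sub_sub_sub_cancel_right]
  have hsq : ‖u - a‖ ^ 2 ≤ ‖u - x‖ ^ 2 := pow_le_pow_left₀ (norm_nonneg _) hle 2
  have hzero : ‖a - x‖ ^ 2 = 0 := le_antisymm (by linarith) (sq_nonneg _)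
  exact norm_sub_eq_zero_iff.mp (pow_eq_zero_iff two_ne_zero |>.mp hzero)

end InnerProductSpace

theorem IsProjOn.apply_add_smul_sub_eq {n : ℕ} {C : Set (EuclideanSpace ℝ (Fin n))}
    {P : EuclideanSpace ℝ (Fin n) → EuclideanSpace ℝ (Fin n)} (hP : IsProjOn C P)
    (hC : Convex ℝ C) {x y : EuclideanSpace ℝ (Fin n)} (hx : x ∈ C)
    (hmin : IsMinOn (fun a => ‖y - a‖) C x) {t : ℝ} (ht : 0 ≤ t) :
    P (x + t • (y - x)) = x := by
  obtain ⟨hPC, hPmin⟩ := hP (x + t • (y - x))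
  refine eq_of_norm_sub_le_of_real_inner_sub_nonpos (hPmin x hx) ?_
  rw [add_sub_cancel_left, real_inner_smul_left]
  exact mul_nonpos_of_nonneg_of_nonpos ht
    (real_inner_sub_nonpos_of_isMinOn_norm_sub hC hx hmin _ hPC)

theorem norm_sub_le_of_eq_sInf {E : Type*} [SeminormedAddCommGroup E] {A B : Set E} {x y : E}
    (hd : ‖x - y‖ = sInf {d : ℝ | ∃ a ∈ A, ∃ b ∈ B, d = ‖a - b‖}) :
    ∀ a ∈ A, ∀ b ∈ B, ‖x - y‖ ≤ ‖a - b‖ := fun a ha b hb =>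
  hd ▸ csInf_le ⟨0, fun _ ⟨_, _, _, _, hd'⟩ => hd' ▸ norm_nonneg _⟩ ⟨a, ha, b, hb, rfl⟩

theorem proj_of_convexComb_of_realize_dist_general {n : ℕ}
    (A B : Set (EuclideanSpace ℝ (Fin n)))
    (hAcv : Convex ℝ A)
    (hBcv : Convex ℝ B)
    (PA PB : EuclideanSpace ℝ (Fin n) → EuclideanSpace ℝ (Fin n))
    (hPA : IsProjOn A PA) (hPB : IsProjOn B PB)
    (x y : EuclideanSpace ℝ (Fin n)) (hx : x ∈ A) (hy : y ∈ B)
    (hd : ‖x - y‖ = sInf {d : ℝ | ∃ a ∈ A, ∃ b ∈ B, d = ‖a - b‖})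
    (α : ℝ) (hα : α ∈ Set.Ioo (0 : ℝ) 1)
    (w : EuclideanSpace ℝ (Fin n)) (hw : w = (1 - α) • x + α • y) :
    PA w = x ∧ PB w = y := by
  have hle := norm_sub_le_of_eq_sInf hd
  have hminA : IsMinOn (fun a => ‖y - a‖) A x := isMinOn_iff.mpr fun a ha => by
    simpa only [norm_sub_rev y] using hle a ha y hy
  have hminB : IsMinOn (fun b => ‖x - b‖) B y := isMinOn_iff.mpr fun b hb => hle x hx b hb
  have hwA : w = x + α • (y - x) := by rw [hw]; module
  have hwB : w = y + (1 - α) • (x - y) := by rw [hw]; module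
  exact ⟨hwA ▸ hPA.apply_add_smul_sub_eq hAcv hx hminA hα.1.le,
    hwB ▸ hPB.apply_add_smul_sub_eq hBcv hy hminB (sub_nonneg.mpr hα.2.le)⟩

/-- If `(x, y) ∈ A × B` realizes `dist(A, B)`, `α ∈ (0, 1)` and `w = (1 − α)x + αy`,
then `P_A(w) = x` and `P_B(w) = y`. -/
theorem proj_of_convexComb_of_realize_dist {n : ℕ}
    (A B : Set (EuclideanSpace ℝ (Fin n)))
    (hAne : A.Nonempty) (hAcl : IsClosed A) (hAcv : Convex ℝ A)
    (hBne : B.Nonempty) (hBcl : IsClosed B) (hBcv : Convex ℝ B)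
    (PA PB : EuclideanSpace ℝ (Fin n) → EuclideanSpace ℝ (Fin n))
    (hPA : IsProjOn A PA) (hPB : IsProjOn B PB)
    (x y : EuclideanSpace ℝ (Fin n)) (hx : x ∈ A) (hy : y ∈ B)
    (hd : ‖x - y‖ = sInf {d : ℝ | ∃ a ∈ A, ∃ b ∈ B, d = ‖a - b‖})
    (α : ℝ) (hα : α ∈ Set.Ioo (0 : ℝ) 1)
    (w : EuclideanSpace ℝ (Fin n)) (hw : w = (1 - α) • x + α • y) :
    PA w = x ∧ PB w = y :=
  proj_of_convexComb_of_realize_dist_general A B hAcv hBcv PA PB hPA hPB x y hx hy hd α hα w hw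
end

section
/- Let A, B ⊆ ℝⁿ be nonempty closed convex sets, α ∈ (0, 1), P̄ = (1 − α)P_A + αP_B, and D = {(x, y) ∈ A × B : ‖x − y‖ = dist(A, B)}, where dist(A, B) = inf{‖a − b‖ : a ∈ A, b ∈ B}. Then the fixed point set {w ∈ ℝⁿ : P̄(w) = w} equals {(1 − α)x + αy : (x, y) ∈ D}. -/
open scoped RealInnerProductSpace

section Normed

variable {E : Type*} [SeminormedAddCommGroup E]

theorem norm_sub_eq_sInf_iff {A B : Set E} {x y : E} (hx : x ∈ A) (hy : y ∈ B) :
    ‖x - y‖ = sInf {d : ℝ | ∃ a ∈ A, ∃ b ∈ B, d = ‖a - b‖} ↔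
      ∀ a ∈ A, ∀ b ∈ B, ‖x - y‖ ≤ ‖a - b‖ := by
  set S := {d : ℝ | ∃ a ∈ A, ∃ b ∈ B, d = ‖a - b‖}
  constructor
  · rintro h a ha b hb
    have hbdd : BddBelow S := ⟨0, by rintro _ ⟨a, -, b, -, rfl⟩; exact norm_nonneg _⟩
    exact h ▸ csInf_le hbdd ⟨a, ha, b, hb, rfl⟩
  · intro h
    have hleast : IsLeast S ‖x - y‖ :=
      ⟨⟨x, hx, y, hy, rfl⟩, by rintro _ ⟨a, ha, b, hb, rfl⟩; exact h a ha b hb⟩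
    exact hleast.csInf_eq.symm

theorem norm_convexComb_sub_le_of_norm_sub_le [NormedSpace ℝ E] {x y z : E} {s t : ℝ}
    (hs : 0 ≤ s) (ht : 0 ≤ t) (hst : s + t = 1)
    (h : ‖x - y‖ ≤ ‖z - y‖) : ‖s • x + t • y - x‖ ≤ ‖s • x + t • y - z‖ := by
  have hx : ‖s • x + t • y - x‖ = t * ‖x - y‖ := by
    rw [show s • x + t • y - x = t • (y - x) by linear_combination (norm := module) hst • x,
      norm_smul, Real.norm_of_nonneg ht, norm_sub_rev]
  have hy : ‖s • x + t • y - y‖ = s * ‖x - y‖ := by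
    rw [show s • x + t • y - y = s • (x - y) by linear_combination (norm := module) hst • y,
      norm_smul, Real.norm_of_nonneg hs]
  have htri := norm_sub_le_norm_sub_add_norm_sub z (s • x + t • y) y
  have hsplit : t * ‖x - y‖ = ‖x - y‖ - s * ‖x - y‖ := by linear_combination ‖x - y‖ * hst
  rw [norm_sub_rev z (s • x + t • y)] at htri
  linarith

end Normed

section InnerProductSpace

variable {E : Type*} [NormedAddCommGroup E] [InnerProductSpace ℝ E]

theorem real_inner_sub_nonpos_of_forall_norm_sub_le {C : Set E} (hC : Convex ℝ C) {u x : E}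
    (hx : x ∈ C) (hmin : ∀ z ∈ C, ‖u - x‖ ≤ ‖u - z‖) {z : E} (hz : z ∈ C) :
    ⟪u - x, z - x⟫ ≤ 0 := by
  have : Nonempty C := ⟨⟨x, hx⟩⟩
  refine (norm_eq_iInf_iff_real_inner_le_zero hC hx).1 (le_antisymm ?_ ?_) z hz
  · exact le_ciInf fun z => hmin z z.2
  · have hbdd : BddBelow (Set.range fun z : C => ‖u - z‖) :=
      ⟨0, Set.forall_mem_range.2 fun _ => norm_nonneg _⟩
    exact ciInf_le hbdd ⟨x, hx⟩

theorem eq_of_real_inner_sub_nonpos {u x p : E} (hx : ⟪u - x, p - x⟫ ≤ 0)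
    (hp : ⟪u - p, x - p⟫ ≤ 0) : x = p := by
  have : ⟪p - x, p - x⟫ ≤ 0 :=
    calc ⟪p - x, p - x⟫ = ⟪u - x, p - x⟫ + ⟪u - p, x - p⟫ := by
          rw [← neg_sub p x, inner_neg_right, ← sub_eq_add_neg, ← inner_sub_left,
            sub_sub_sub_cancel_left]
      _ ≤ 0 := add_nonpos hx hp
  exact (sub_eq_zero.1 (real_inner_self_nonpos.1 this)).symm

theorem eq_of_forall_norm_sub_le {C : Set E} (hC : Convex ℝ C) {u x p : E}
    (hx : x ∈ C) (hp : p ∈ C) (hxmin : ∀ z ∈ C, ‖u - x‖ ≤ ‖u - z‖)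
    (hpmin : ∀ z ∈ C, ‖u - p‖ ≤ ‖u - z‖) : x = p :=
  eq_of_real_inner_sub_nonpos (real_inner_sub_nonpos_of_forall_norm_sub_le hC hx hxmin hp)
    (real_inner_sub_nonpos_of_forall_norm_sub_le hC hp hpmin hx)

theorem norm_sub_le_of_real_inner_sub_nonpos {x y a b : E} (ha : ⟪y - x, a - x⟫ ≤ 0)
    (hb : ⟪x - y, b - y⟫ ≤ 0) : ‖x - y‖ ≤ ‖a - b‖ := by
  have hsq : ‖x - y‖ ^ 2 ≤ ‖x - y‖ * ‖a - b‖ :=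
    calc ‖x - y‖ ^ 2 ≤ ‖x - y‖ ^ 2 - ⟪y - x, a - x⟫ - ⟪x - y, b - y⟫ := by linarith
      _ = ⟪x - y, a - b⟫ := by
          rw [← real_inner_self_eq_norm_sq]
          simp only [inner_sub_left, inner_sub_right, real_inner_comm]
          ring
      _ ≤ ‖x - y‖ * ‖a - b‖ := real_inner_le_norm _ _
  rcases (norm_nonneg (x - y)).eq_or_lt with h0 | h0
  · exact h0 ▸ norm_nonneg _
  · exact le_of_mul_le_mul_left (by rwa [sq] at hsq) h0

end InnerProductSpace

namespace IsProjOn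

variable {n : ℕ} {C : Set (EuclideanSpace ℝ (Fin n))}
  {P : EuclideanSpace ℝ (Fin n) → EuclideanSpace ℝ (Fin n)}

theorem real_inner_sub_nonpos (hP : IsProjOn C P) (hC : Convex ℝ C)
    (u : EuclideanSpace ℝ (Fin n)) {z : EuclideanSpace ℝ (Fin n)} (hz : z ∈ C) :
    ⟪u - P u, z - P u⟫ ≤ 0 :=
  real_inner_sub_nonpos_of_forall_norm_sub_le hC (hP u).1 (hP u).2 hz

theorem apply_eq_of_forall_norm_sub_le (hP : IsProjOn C P) (hC : Convex ℝ C)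
    {u x : EuclideanSpace ℝ (Fin n)} (hx : x ∈ C)
    (hmin : ∀ z ∈ C, ‖u - x‖ ≤ ‖u - z‖) : P u = x :=
  eq_of_forall_norm_sub_le hC (hP u).1 hx (hP u).2 hmin

end IsProjOn

theorem fixedPointSet_convexComb_proj_general {n : ℕ}
    (A B : Set (EuclideanSpace ℝ (Fin n)))
    (hAcv : Convex ℝ A)
    (hBcv : Convex ℝ B)
    (PA PB : EuclideanSpace ℝ (Fin n) → EuclideanSpace ℝ (Fin n))
    (hPA : IsProjOn A PA) (hPB : IsProjOn B PB)
    (α : ℝ) (hα : α ∈ Set.Ioo (0 : ℝ) 1) :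
    {w : EuclideanSpace ℝ (Fin n) | (1 - α) • PA w + α • PB w = w} =
      {w : EuclideanSpace ℝ (Fin n) | ∃ x ∈ A, ∃ y ∈ B,
        ‖x - y‖ = sInf {d : ℝ | ∃ a ∈ A, ∃ b ∈ B, d = ‖a - b‖} ∧
        w = (1 - α) • x + α • y} := by
  obtain ⟨hα0, hα1⟩ := hα
  ext w
  constructor
  · intro (hw : (1 - α) • PA w + α • PB w = w)
    have hx := (hPA w).1
    have hy := (hPB w).1
    refine ⟨PA w, hx, PB w, hy, (norm_sub_eq_sInf_iff hx hy).2 fun a ha b hb => ?_, hw.symm⟩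
    have hwx : w - PA w = α • (PB w - PA w) := by linear_combination (norm := module) -hw
    have hwy : w - PB w = (1 - α) • (PA w - PB w) := by linear_combination (norm := module) -hw
    have hna := hPA.real_inner_sub_nonpos hAcv w ha
    have hnb := hPB.real_inner_sub_nonpos hBcv w hb
    rw [hwx, real_inner_smul_left] at hna
    rw [hwy, real_inner_smul_left] at hnb
    exact norm_sub_le_of_real_inner_sub_nonpos (nonpos_of_mul_nonpos_right hna hα0)
      (nonpos_of_mul_nonpos_right hnb (sub_pos.2 hα1))
  · rintro ⟨x, hx, y, hy, hxy, rfl⟩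
    rw [norm_sub_eq_sInf_iff hx hy] at hxy
    have hPAw : PA ((1 - α) • x + α • y) = x :=
      hPA.apply_eq_of_forall_norm_sub_le hAcv hx fun a ha =>
        norm_convexComb_sub_le_of_norm_sub_le (sub_nonneg.2 hα1.le) hα0.le (by ring)
          (hxy a ha y hy)
    have hPBw : PB ((1 - α) • x + α • y) = y := by
      rw [add_comm]
      refine hPB.apply_eq_of_forall_norm_sub_le hBcv hy fun b hb =>
        norm_convexComb_sub_le_of_norm_sub_le hα0.le (sub_nonneg.2 hα1.le) (by ring) ?_
      rw [norm_sub_rev y, norm_sub_rev b]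
      exact hxy x hx b hb
    show (1 - α) • PA _ + α • PB _ = _
    rw [hPAw, hPBw]

/-- The fixed points of `P̄ = (1 − α)P_A + αP_B` are exactly the points
`(1 − α)x + αy` where `(x, y) ∈ A × B` realizes `dist(A, B)`. -/
theorem fixedPointSet_convexComb_proj {n : ℕ}
    (A B : Set (EuclideanSpace ℝ (Fin n)))
    (hAne : A.Nonempty) (hAcl : IsClosed A) (hAcv : Convex ℝ A)
    (hBne : B.Nonempty) (hBcl : IsClosed B) (hBcv : Convex ℝ B)
    (PA PB : EuclideanSpace ℝ (Fin n) → EuclideanSpace ℝ (Fin n))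
    (hPA : IsProjOn A PA) (hPB : IsProjOn B PB)
    (α : ℝ) (hα : α ∈ Set.Ioo (0 : ℝ) 1) :
    {w : EuclideanSpace ℝ (Fin n) | (1 - α) • PA w + α • PB w = w} =
      {w : EuclideanSpace ℝ (Fin n) | ∃ x ∈ A, ∃ y ∈ B,
        ‖x - y‖ = sInf {d : ℝ | ∃ a ∈ A, ∃ b ∈ B, d = ‖a - b‖} ∧
        w = (1 - α) • x + α • y} :=
  fixedPointSet_convexComb_proj_general A B hAcv hBcv PA PB hPA hPB α hα
end

section
/- Let A, B ⊆ ℝⁿ be nonempty closed convex sets, α ∈ (0, 1), and P̄ = (1 − α)P_A + αP_B. Then there exists a nonempty closed convex set E ⊆ ℝⁿ such that P̄ = P_E if and only if there exists a vector c ∈ ℝⁿ, orthogonal to the direction space of the affine hull of A (i.e. ⟨c, x − x'⟩ = 0 for all x, x' ∈ A), such that B = A + c; in that case one may take E = A + αc. -/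
set_option maxHeartbeats 1000000

open scoped InnerProductSpace

section Aux

variable {n : ℕ}

lemma aux_norm_le_of_sq {a b : ℝ} (hb : 0 ≤ b) (ha : 0 ≤ a) (h : a^2 ≤ b^2) : a ≤ b := by
  have := Real.sqrt_le_sqrt h
  rwa [Real.sqrt_sq ha, Real.sqrt_sq hb] at this

lemma aux_eq_of_sq_nonpos {u : EuclideanSpace ℝ (Fin n)} (h : ‖u‖^2 ≤ 0) : u = 0 := by
  have h2 : ‖u‖^2 = 0 := le_antisymm h (sq_nonneg _)
  have h3 : ‖u‖ = 0 := (pow_eq_zero_iff two_ne_zero).mp h2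
  exact norm_eq_zero.mp h3

/-- minimality implies the variational inequality -/
lemma aux_vi {C : Set (EuclideanSpace ℝ (Fin n))} (hC : Convex ℝ C)
    {x p : EuclideanSpace ℝ (Fin n)} (hp : p ∈ C)
    (hmin : ∀ y ∈ C, ‖x - p‖ ≤ ‖x - y‖) :
    ∀ y ∈ C, ⟪x - p, y - p⟫_ℝ ≤ 0 := by
  intro y hy
  by_contra hcon
  push_neg at hcon
  have hyp : y - p ≠ 0 := by
    intro h0
    rw [h0, inner_zero_right] at hcon
    exact lt_irrefl 0 hcon
  have hq : 0 < ‖y - p‖^2 := pow_pos (norm_pos_iff.mpr hyp) 2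
  set s : ℝ := ⟪x - p, y - p⟫_ℝ with hs
  set t : ℝ := min 1 (s / ‖y - p‖^2) with ht
  have ht0 : 0 < t := lt_min one_pos (div_pos hcon hq)
  have ht1 : t ≤ 1 := min_le_left _ _
  have hts : t * ‖y - p‖^2 ≤ s := by
    have := min_le_right 1 (s / ‖y - p‖^2)
    calc t * ‖y - p‖^2 ≤ s / ‖y - p‖^2 * ‖y - p‖^2 :=
          mul_le_mul_of_nonneg_right this hq.le
      _ = s := div_mul_cancel₀ _ hq.ne'
  have hzC : p + t • (y - p) ∈ C := by
    have := hC hp hy (by linarith : (0:ℝ) ≤ 1 - t) ht0.le (by ring)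
    convert this using 1
    module
  have hsq : ‖x - (p + t • (y - p))‖^2 = ‖x - p‖^2 - 2 * (t * s) + t^2 * ‖y - p‖^2 := by
    rw [show x - (p + t • (y - p)) = (x - p) - t • (y - p) by abel, norm_sub_sq_real,
      real_inner_smul_right, norm_smul, Real.norm_eq_abs, abs_of_pos ht0, mul_pow, ← hs]
  have hmin' := hmin _ hzC
  have hmin2 : ‖x - p‖^2 ≤ ‖x - (p + t • (y - p))‖^2 :=
    pow_le_pow_left₀ (norm_nonneg _) hmin' 2
  nlinarith [mul_le_mul_of_nonneg_left hts ht0.le, mul_pos ht0 hcon]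

/-- the variational inequality implies minimality -/
lemma aux_min_of_vi {C : Set (EuclideanSpace ℝ (Fin n))}
    {x p : EuclideanSpace ℝ (Fin n)}
    (hvi : ∀ y ∈ C, ⟪x - p, y - p⟫_ℝ ≤ 0) :
    ∀ y ∈ C, ‖x - p‖ ≤ ‖x - y‖ := by
  intro y hy
  have h := hvi y hy
  have hid : ‖x - y‖^2 = ‖x - p‖^2 - 2 * ⟪x - p, y - p⟫_ℝ + ‖y - p‖^2 := by
    rw [show x - y = (x - p) - (y - p) by abel, norm_sub_sq_real]
  refine aux_norm_le_of_sq (norm_nonneg _) (norm_nonneg _) ?_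
  nlinarith [sq_nonneg ‖y - p‖]

/-- uniqueness of minimizers over a convex set -/
lemma aux_unique {C : Set (EuclideanSpace ℝ (Fin n))} (hC : Convex ℝ C)
    {x p q : EuclideanSpace ℝ (Fin n)} (hp : p ∈ C) (hq : q ∈ C)
    (hpm : ∀ y ∈ C, ‖x - p‖ ≤ ‖x - y‖) (hqm : ∀ y ∈ C, ‖x - q‖ ≤ ‖x - y‖) :
    p = q := by
  have h1 := aux_vi hC hp hpm q hq
  have h2 := aux_vi hC hq hqm p hp
  have h2' : ⟪x - q, p - q⟫_ℝ = -⟪x - q, q - p⟫_ℝ := by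
    rw [show p - q = -(q - p) by abel, inner_neg_right]
  have hid : ⟪x - p, q - p⟫_ℝ - ⟪x - q, q - p⟫_ℝ = ‖q - p‖^2 := by
    rw [← inner_sub_left, show x - p - (x - q) = q - p by abel,
      real_inner_self_eq_norm_sq]
  have : ‖q - p‖^2 ≤ 0 := by linarith
  have := aux_eq_of_sq_nonpos this
  rw [sub_eq_zero] at this
  exact this.symm

/-- firm nonexpansiveness -/
lemma aux_firm {C : Set (EuclideanSpace ℝ (Fin n))} (hC : Convex ℝ C)
    {P : EuclideanSpace ℝ (Fin n) → EuclideanSpace ℝ (Fin n)}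
    (hP : IsProjOn C P) (x y : EuclideanSpace ℝ (Fin n)) :
    ‖P x - P y‖^2 ≤ ⟪P x - P y, x - y⟫_ℝ := by
  have h1 := aux_vi hC (hP x).1 (hP x).2 (P y) (hP y).1
  have h2 := aux_vi hC (hP y).1 (hP y).2 (P x) (hP x).1
  have hid : ⟪P x - P y, x - y⟫_ℝ - ‖P x - P y‖^2
      = ⟪P x - P y, x - P x⟫_ℝ - ⟪P x - P y, y - P y⟫_ℝ := by
    rw [← real_inner_self_eq_norm_sq, ← inner_sub_right,
      show x - y - (P x - P y) = (x - P x) - (y - P y) by abel, inner_sub_right]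
  have h1' : 0 ≤ ⟪P x - P y, x - P x⟫_ℝ := by
    rw [real_inner_comm]
    rw [show P y - P x = -(P x - P y) by abel, inner_neg_right] at h1
    linarith
  have h2' : ⟪P x - P y, y - P y⟫_ℝ ≤ 0 := by
    rw [real_inner_comm]; exact h2
  linarith

/-- projection onto a translate by an orthogonal vector -/
lemma aux_translate {A : Set (EuclideanSpace ℝ (Fin n))}
    {PA : EuclideanSpace ℝ (Fin n) → EuclideanSpace ℝ (Fin n)}
    (hPA : IsProjOn A PA) (c : EuclideanSpace ℝ (Fin n))
    (hc : ∀ x ∈ A, ∀ x' ∈ A, ⟪c, x - x'⟫_ℝ = 0) :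
    IsProjOn ((fun a => a + c) '' A) (fun x => PA x + c) := by
  intro x
  obtain ⟨hmem, hmin⟩ := hPA x
  refine ⟨⟨PA x, hmem, rfl⟩, ?_⟩
  rintro _ ⟨a, ha, rfl⟩
  have horth : ⟪PA x - a, c⟫_ℝ = 0 := by
    rw [real_inner_comm]; exact hc _ hmem _ ha
  have h1 : ‖x - (PA x + c)‖^2 = ‖x - PA x‖^2 - 2 * ⟪x - PA x, c⟫_ℝ + ‖c‖^2 := by
    rw [show x - (PA x + c) = (x - PA x) - c by abel, norm_sub_sq_real]
  have h2 : ‖x - (a + c)‖^2 = ‖x - a‖^2 - 2 * ⟪x - a, c⟫_ℝ + ‖c‖^2 := by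
    rw [show x - (a + c) = (x - a) - c by abel, norm_sub_sq_real]
  have h3 : ⟪x - a, c⟫_ℝ = ⟪x - PA x, c⟫_ℝ := by
    rw [show x - a = (x - PA x) + (PA x - a) by abel, inner_add_left, horth, add_zero]
  have h4 : ‖x - PA x‖^2 ≤ ‖x - a‖^2 := by
    have := hmin a ha
    exact pow_le_pow_left₀ (norm_nonneg _) this 2
  refine aux_norm_le_of_sq (norm_nonneg _) (norm_nonneg _) ?_
  rw [h1, h2, h3]
  linarith

/-- the key lemma for the forward direction -/
lemma aux_key {A B : Set (EuclideanSpace ℝ (Fin n))}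
    (hAcv : Convex ℝ A) (hBcv : Convex ℝ B)
    {PA PB : EuclideanSpace ℝ (Fin n) → EuclideanSpace ℝ (Fin n)}
    (hPA : IsProjOn A PA) (hPB : IsProjOn B PB)
    {α : ℝ} (hα : α ∈ Set.Ioo (0 : ℝ) 1)
    {E : Set (EuclideanSpace ℝ (Fin n))}
    {PE : EuclideanSpace ℝ (Fin n) → EuclideanSpace ℝ (Fin n)}
    (hPE : IsProjOn E PE)
    (heq : ∀ x, (1 - α) • PA x + α • PB x = PE x)
    {x : EuclideanSpace ℝ (Fin n)} (hx : x ∈ A) :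
    PA (PB x) = x ∧ ∀ a ∈ A, ⟪PB x - x, a - x⟫_ℝ ≤ 0 := by
  obtain ⟨hα0, hα1⟩ := hα
  have hPAx : PA x = x := by
    have h := (hPA x).2 x hx
    simp only [sub_self, norm_zero] at h
    exact (sub_eq_zero.mp (norm_le_zero_iff.mp h)).symm
  have hyB : PB x ∈ B := (hPB x).1
  set e : EuclideanSpace ℝ (Fin n) := x + α • (PB x - x) with he
  have hex : e = PE x := by
    rw [← heq x, hPAx, he]; module
  have heE : e ∈ E := by rw [hex]; exact (hPE x).1
  have hPEe : PE e = e := by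
    have h := (hPE e).2 e heE
    simp only [sub_self, norm_zero] at h
    exact (sub_eq_zero.mp (norm_le_zero_iff.mp h)).symm
  have heq_e : (1 - α) • PA e + α • PB e = e := by rw [heq e, hPEe]
  -- PB e = PB x
  have hPBe : PB e = PB x := by
    refine aux_unique hBcv (hPB e).1 hyB (hPB e).2 (aux_min_of_vi ?_)
    intro b hb
    have hvb := aux_vi hBcv (hPB x).1 (hPB x).2 b hb
    have hey : e - PB x = (1 - α) • (x - PB x) := by rw [he]; module
    rw [hey, real_inner_smul_left]
    exact mul_nonpos_of_nonneg_of_nonpos (by linarith) hvb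
  -- PA e = x
  have hPAe : PA e = x := by
    rw [hPBe] at heq_e
    have h2 : (1 - α) • PA e = (1 - α) • x := by
      rw [he] at heq_e
      rw [← add_sub_cancel_right ((1 - α) • PA e) (α • PB x), heq_e]
      module
    exact smul_right_injective _ (sub_ne_zero.mpr hα1.ne') h2
  have hVIA : ∀ a ∈ A, ⟪PB x - x, a - x⟫_ℝ ≤ 0 := by
    intro a ha
    have h := aux_vi hAcv (hPA e).1 (hPA e).2 a ha
    rw [hPAe, show e - x = α • (PB x - x) by rw [he]; abel, real_inner_smul_left] at h
    by_contra hcon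
    push_neg at hcon
    exact absurd h (not_le.mpr (mul_pos hα0 hcon))
  refine ⟨?_, hVIA⟩
  -- PA (PB x) = x
  have hwA : PA (PB x) ∈ A := (hPA (PB x)).1
  have h1 : ⟪PB x - x, PA (PB x) - x⟫_ℝ ≤ 0 := hVIA (PA (PB x)) hwA
  have h2 : ‖PA (PB x) - PB x‖ ≤ ‖PB x - x‖ := by
    rw [show PA (PB x) - PB x = -(PB x - PA (PB x)) by abel, norm_neg]
    exact (hPA (PB x)).2 x hx
  have h2' : ‖PA (PB x) - PB x‖^2 ≤ ‖PB x - x‖^2 :=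
    pow_le_pow_left₀ (norm_nonneg _) h2 2
  have e1 : ⟪PB x - x, PA (PB x) - x⟫_ℝ
      = ‖PB x - x‖^2 + ⟪PB x - x, PA (PB x) - PB x⟫_ℝ := by
    rw [show PA (PB x) - x = (PB x - x) + (PA (PB x) - PB x) by abel, inner_add_right,
      real_inner_self_eq_norm_sq]
  have e2 : ‖PA (PB x) - x‖^2
      = ‖PB x - x‖^2 + 2 * ⟪PB x - x, PA (PB x) - PB x⟫_ℝ + ‖PA (PB x) - PB x‖^2 := by
    rw [show PA (PB x) - x = (PB x - x) + (PA (PB x) - PB x) by abel, norm_add_sq_real]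
  have hs : ‖PA (PB x) - x‖^2 ≤ 0 := by linarith
  exact sub_eq_zero.mp (aux_eq_of_sq_nonpos hs)

end Aux

/-- `P̄ = (1 − α)P_A + αP_B` is an orthogonal projection onto some nonempty closed convex
set `E` iff `B = A + c` for some `c` orthogonal to the direction space of the affine hull
of `A`; and in that case one may take `E = A + αc`. -/
theorem convexComb_proj_isProj_iff_translate {n : ℕ}
    (A B : Set (EuclideanSpace ℝ (Fin n)))
    (hAne : A.Nonempty) (hAcl : IsClosed A) (hAcv : Convex ℝ A)
    (hBne : B.Nonempty) (hBcl : IsClosed B) (hBcv : Convex ℝ B)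
    (PA PB : EuclideanSpace ℝ (Fin n) → EuclideanSpace ℝ (Fin n))
    (hPA : IsProjOn A PA) (hPB : IsProjOn B PB)
    (α : ℝ) (hα : α ∈ Set.Ioo (0 : ℝ) 1) :
    ((∃ E : Set (EuclideanSpace ℝ (Fin n)), ∃ PE,
        E.Nonempty ∧ IsClosed E ∧ Convex ℝ E ∧ IsProjOn E PE ∧
        ∀ x, (1 - α) • PA x + α • PB x = PE x) ↔
      (∃ c : EuclideanSpace ℝ (Fin n),
        (∀ x ∈ A, ∀ x' ∈ A, ⟪c, x - x'⟫_ℝ = 0) ∧ B = (fun a => a + c) '' A)) ∧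
    (∀ c : EuclideanSpace ℝ (Fin n),
      (∀ x ∈ A, ∀ x' ∈ A, ⟪c, x - x'⟫_ℝ = 0) → B = (fun a => a + c) '' A →
      IsProjOn ((fun a => a + α • c) '' A) (fun x => (1 - α) • PA x + α • PB x)) := by
  have part2 : ∀ c : EuclideanSpace ℝ (Fin n),
      (∀ x ∈ A, ∀ x' ∈ A, ⟪c, x - x'⟫_ℝ = 0) → B = (fun a => a + c) '' A →
      IsProjOn ((fun a => a + α • c) '' A) (fun x => (1 - α) • PA x + α • PB x) := by
    intro c hc hBeq
    have htr := aux_translate hPA c hc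
    rw [← hBeq] at htr
    have hPBeq : ∀ x, PB x = PA x + c := fun x =>
      aux_unique hBcv (hPB x).1 (htr x).1 (hPB x).2 (htr x).2
    have hc' : ∀ x ∈ A, ∀ x' ∈ A, ⟪α • c, x - x'⟫_ℝ = 0 := by
      intro x hx x' hx'
      rw [real_inner_smul_left, hc x hx x' hx', mul_zero]
    have htr2 := aux_translate hPA (α • c) hc'
    have hfun : (fun x => (1 - α) • PA x + α • PB x)
        = (fun x => PA x + α • c) := by
      funext x
      rw [hPBeq x]
      module
    rw [hfun]
    exact htr2
  refine ⟨⟨?_, ?_⟩, part2⟩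
  · rintro ⟨E, PE, hEne, hEcl, hEcv, hPE, heq⟩
    have hα' : (1 - α) ∈ Set.Ioo (0 : ℝ) 1 := ⟨by linarith [hα.2], by linarith [hα.1]⟩
    have heq' : ∀ x, (1 - (1 - α)) • PB x + (1 - α) • PA x = PE x := by
      intro x
      rw [← heq x, show (1 - (1 - α)) = α by ring, add_comm]
    have hkA : ∀ x ∈ A, PA (PB x) = x ∧ ∀ a ∈ A, ⟪PB x - x, a - x⟫_ℝ ≤ 0 :=
      fun x hx => aux_key hAcv hBcv hPA hPB hα hPE heq hx
    have hkB : ∀ y ∈ B, PB (PA y) = y ∧ ∀ b ∈ B, ⟪PA y - y, b - y⟫_ℝ ≤ 0 :=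
      fun y hy => aux_key hBcv hAcv hPB hPA hα' hPE heq' hy
    obtain ⟨x₀, hx₀⟩ := hAne
    have hconst : ∀ x ∈ A, PB x - x = PB x₀ - x₀ := by
      intro x hx
      have f1 := aux_firm hBcv hPB x x₀
      have f2 := aux_firm hAcv hPA (PB x) (PB x₀)
      rw [(hkA x hx).1, (hkA x₀ hx₀).1] at f2
      have hcomm : ⟪x - x₀, PB x - PB x₀⟫_ℝ = ⟪PB x - PB x₀, x - x₀⟫_ℝ :=
        real_inner_comm _ _
      rw [hcomm] at f2
      have hid : ‖(PB x - PB x₀) - (x - x₀)‖^2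
          = ‖PB x - PB x₀‖^2 - 2 * ⟪PB x - PB x₀, x - x₀⟫_ℝ + ‖x - x₀‖^2 :=
        norm_sub_sq_real _ _
      have hs : ‖(PB x - PB x₀) - (x - x₀)‖^2 ≤ 0 := by linarith
      have h0 := aux_eq_of_sq_nonpos hs
      have h1 : PB x - PB x₀ = x - x₀ := sub_eq_zero.mp h0
      exact sub_eq_sub_iff_sub_eq_sub.mpr h1
    refine ⟨PB x₀ - x₀, ?_, ?_⟩
    · intro x hx x' hx'
      have h1 := (hkA x hx).2 x' hx'
      have h2 := (hkA x' hx').2 x hx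
      rw [hconst x hx] at h1
      rw [hconst x' hx'] at h2
      have hneg : ⟪PB x₀ - x₀, x' - x⟫_ℝ = -⟪PB x₀ - x₀, x - x'⟫_ℝ := by
        rw [show x' - x = -(x - x') by abel, inner_neg_right]
      linarith [hneg ▸ h1]
    · refine Set.Subset.antisymm ?_ ?_
      · intro y hy
        refine ⟨PA y, (hPA y).1, ?_⟩
        show PA y + (PB x₀ - x₀) = y
        rw [← hconst (PA y) (hPA y).1, (hkB y hy).1]
        abel
      · rintro _ ⟨a, ha, rfl⟩
        show a + (PB x₀ - x₀) ∈ B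
        rw [← hconst a ha, show a + (PB a - a) = PB a by abel]
        exact (hPB a).1
  · rintro ⟨c, hc, hBeq⟩
    refine ⟨(fun a => a + α • c) '' A, fun x => (1 - α) • PA x + α • PB x,
      hAne.image _, ?_, ?_, part2 c hc hBeq, fun x => rfl⟩
    · exact (Homeomorph.addRight (α • c)).isClosedMap A hAcl
    · have : (fun a : EuclideanSpace ℝ (Fin n) => a + α • c)
          = (fun a => α • c + a) := funext fun a => add_comm _ _
      rw [this]
      exact hAcv.translate _
end

section
/- Let C₁, …, C_m ⊆ ℝⁿ be nonempty closed convex sets, α₁, …, α_m nonnegative scalars with Σᵢ αᵢ = 1, and P̄ = Σᵢ αᵢ P_{Cᵢ}. Suppose there exist scalars β₂, …, β_m ∈ ℝ and a vector c ∈ ℝⁿ orthogonal to the direction space of the affine hull of C₁ (i.e. ⟨c, x − x'⟩ = 0 for all x, x' ∈ C₁) with Cᵢ = C₁ + βᵢ c for i = 2, …, m. Set β̄ = Σ_{i=2}^m αᵢβᵢ and E = C₁ + β̄c. Then P̄ = P_E. -/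
open scoped InnerProductSpace

lemma norm_translate_le_iff {E : Type*} [NormedAddCommGroup E] [InnerProductSpace ℝ E]
    (u v w : E) (h : ⟪u - v, w⟫_ℝ = 0) : ‖u - w‖ ≤ ‖v - w‖ ↔ ‖u‖ ≤ ‖v‖ := by
  have h2 : ⟪u, w⟫_ℝ = ⟪v, w⟫_ℝ := by
    rw [inner_sub_left] at h; linarith
  have e1 := @norm_sub_sq_real E _ _ u w
  have e2 := @norm_sub_sq_real E _ _ v w
  constructor <;> intro hle <;>
    nlinarith [norm_nonneg (u - w), norm_nonneg (v - w), norm_nonneg u, norm_nonneg v]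

lemma proj_unique' {E : Type*} [NormedAddCommGroup E] [InnerProductSpace ℝ E]
    {C : Set E} (hC : Convex ℝ C) {x p q : E} (hp : p ∈ C) (hq : q ∈ C)
    (hpm : ∀ y ∈ C, ‖x - p‖ ≤ ‖x - y‖) (hqm : ∀ y ∈ C, ‖x - q‖ ≤ ‖x - y‖) : p = q := by
  have hm : (1/2 : ℝ) • p + (1/2 : ℝ) • q ∈ C :=
    hC hp hq (by norm_num) (by norm_num) (by norm_num)
  have h1 := hpm _ hm
  have h2 := hqm _ hp
  have h3 := hpm _ hq
  have par := parallelogram_law_with_norm ℝ (x - p) (x - q)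
  have heq : (x - p) + (x - q) = (2:ℝ) • (x - ((1/2:ℝ) • p + (1/2:ℝ) • q)) := by
    module
  have hd : (x - p) - (x - q) = q - p := by abel
  rw [heq, hd, norm_smul] at par
  simp only [Real.norm_ofNat] at par
  have hsq : ‖q - p‖ * ‖q - p‖ ≤ 0 := by
    nlinarith [norm_nonneg (x - p), norm_nonneg (x - q),
      norm_nonneg (x - ((1/2:ℝ) • p + (1/2:ℝ) • q))]
  have hz : ‖q - p‖ = 0 := le_antisymm (by nlinarith [norm_nonneg (q - p)]) (norm_nonneg _)
  have := sub_eq_zero.mp (norm_eq_zero.mp hz)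
  exact this.symm

/-- If each `Cᵢ` is the translate `C₁ + βᵢ c` of `C₁` (with `β₁ = 0`) by multiples of a
vector `c` orthogonal to the direction space of the affine hull of `C₁`, then the convex
combination `P̄ = Σ αᵢ P_{Cᵢ}` is the orthogonal projection onto `E = C₁ + β̄ c`, where
`β̄ = Σ αᵢ βᵢ`. -/
theorem convexComb_proj_of_translates {n m : ℕ}
    (C : Fin (m + 1) → Set (EuclideanSpace ℝ (Fin n)))
    (hC : ∀ i, (C i).Nonempty ∧ IsClosed (C i) ∧ Convex ℝ (C i))
    (P : Fin (m + 1) → EuclideanSpace ℝ (Fin n) → EuclideanSpace ℝ (Fin n))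
    (hP : ∀ i, IsProjOn (C i) (P i))
    (α : Fin (m + 1) → ℝ) (hα : ∀ i, 0 ≤ α i) (hsum : ∑ i, α i = 1)
    (β : Fin (m + 1) → ℝ) (hβ0 : β 0 = 0)
    (c : EuclideanSpace ℝ (Fin n))
    (hc : ∀ x ∈ C 0, ∀ x' ∈ C 0, ⟪c, x - x'⟫_ℝ = 0)
    (htr : ∀ i, C i = (fun a => a + β i • c) '' C 0) :
    IsProjOn ((fun a => a + (∑ i, α i * β i) • c) '' C 0)
      (fun x => ∑ i, α i • P i x) := by
  intro x
  obtain ⟨hC0ne, hC0cl, hC0cv⟩ := hC 0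
  obtain ⟨hP0C, hP0min⟩ := hP 0 x
  have hPi : ∀ i, P i x = P 0 x + β i • c := by
    intro i
    obtain ⟨hPiC, hPimin⟩ := hP i x
    rw [htr i] at hPiC
    obtain ⟨a, haC, hax⟩ := hPiC
    have hamin : ∀ y ∈ C 0, ‖x - a‖ ≤ ‖x - y‖ := by
      intro y hy
      have hmem : (y + β i • c) ∈ C i := by rw [htr i]; exact ⟨y, hy, rfl⟩
      have hle := hPimin (y + β i • c) hmem
      rw [← hax] at hle
      have horth : ⟪(x - a) - (x - y), β i • c⟫_ℝ = 0 := by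
        have hrw : (x - a) - (x - y) = y - a := by abel
        rw [hrw, real_inner_smul_right, real_inner_comm, hc y hy a haC, mul_zero]
      have hiff := norm_translate_le_iff (x - a) (x - y) (β i • c) horth
      have hx1 : x - (a + β i • c) = (x - a) - β i • c := by abel
      have hx2 : x - (y + β i • c) = (x - y) - β i • c := by abel
      rw [hx1, hx2] at hle
      exact hiff.mp hle
    have ha : a = P 0 x := proj_unique' hC0cv haC hP0C hamin hP0min
    rw [← hax, ha]
  have hsum' : (∑ i, α i • P i x) = P 0 x + (∑ i, α i * β i) • c := by
    calc ∑ i, α i • P i x = ∑ i, (α i • P 0 x + (α i * β i) • c) := by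
          refine Finset.sum_congr rfl fun i _ => ?_
          rw [hPi i, smul_add, smul_smul]
      _ = (∑ i, α i) • P 0 x + (∑ i, α i * β i) • c := by
          rw [Finset.sum_add_distrib, ← Finset.sum_smul, ← Finset.sum_smul]
      _ = P 0 x + (∑ i, α i * β i) • c := by rw [hsum, one_smul]
  constructor
  · exact ⟨P 0 x, hP0C, hsum'.symm⟩
  · rintro y ⟨b, hb, rfl⟩
    simp only [hsum']
    have horth : ⟪(x - P 0 x) - (x - b), (∑ i, α i * β i) • c⟫_ℝ = 0 := by
      have hrw : (x - P 0 x) - (x - b) = b - P 0 x := by abel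
      rw [hrw, real_inner_smul_right, real_inner_comm, hc b hb (P 0 x) hP0C, mul_zero]
    have hiff := norm_translate_le_iff (x - P 0 x) (x - b) ((∑ i, α i * β i) • c) horth
    have hx1 : x - (P 0 x + (∑ i, α i * β i) • c) = (x - P 0 x) - (∑ i, α i * β i) • c := by abel
    have hx2 : x - (b + (∑ i, α i * β i) • c) = (x - b) - (∑ i, α i * β i) • c := by abel
    rw [hx1, hx2]
    exact hiff.mpr (hP0min b hb)
end

section
/- For all x ∈ ℝⁿ and all y ∈ Fix(T, P_U), it holds that ‖P_U(T(x)) − y‖² ≤ ‖x − y‖² − ‖T(x) − x‖² − ‖P_U(T(x)) − T(x)‖². -/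
/-- An operator is firmly nonexpansive if
`‖T x - T y‖² ≤ ‖x - y‖² - ‖(T x - T y) - (x - y)‖²` for all `x, y`. -/
def FirmlyNonexpansive {n : ℕ} (T : EuclideanSpace ℝ (Fin n) → EuclideanSpace ℝ (Fin n)) : Prop :=
  ∀ x y, ‖T x - T y‖ ^ 2 ≤ ‖x - y‖ ^ 2 - ‖(T x - T y) - (x - y)‖ ^ 2

/-!
Write `z = T x` and `p = P_U z`. Firm nonexpansiveness at the pair `(x, y)`, with `T y = y`, gives
`‖z - y‖² ≤ ‖x - y‖² - ‖z - x‖²`. Since `U` is affine, `z - p ⟂ y - p`, and Pythagoras gives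
`‖z - y‖² = ‖z - p‖² + ‖p - y‖²`.
-/

open RealInnerProductSpace

section Projection

variable {E : Type*} [NormedAddCommGroup E] [InnerProductSpace ℝ E]

lemma convex_of_forall_lineMap_mem {K : Set E}
    (hK : ∀ x ∈ K, ∀ y ∈ K, ∀ t : ℝ, t • x + (1 - t) • y ∈ K) : Convex ℝ K := by
  intro x hx y hy a b _ _ hab
  obtain rfl : b = 1 - a := by linarith
  exact hK x hx y hy a

lemma real_inner_sub_le_zero_of_forall_norm_sub_le {K : Set E} (hK : Convex ℝ K) {u v : E}
    (hv : v ∈ K) (hmin : ∀ w ∈ K, ‖u - v‖ ≤ ‖u - w‖) : ∀ w ∈ K, ⟪u - v, w - v⟫ ≤ 0 := by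
  have : Nonempty K := ⟨⟨v, hv⟩⟩
  refine (norm_eq_iInf_iff_real_inner_le_zero hK hv).1 (le_antisymm ?_ ?_)
  · exact le_ciInf fun w => hmin w w.2
  · exact ciInf_le ⟨0, by rintro _ ⟨w, rfl⟩; exact norm_nonneg _⟩ (⟨v, hv⟩ : K)

/-- On an affine set the nearest-point inequality `⟪u - v, w - v⟫ ≤ 0` also holds for the
reflected point `2 v - w`, hence is an equality. -/
lemma real_inner_sub_eq_zero_of_forall_norm_sub_le {K : Set E}
    (hK : ∀ x ∈ K, ∀ y ∈ K, ∀ t : ℝ, t • x + (1 - t) • y ∈ K) {u v : E}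
    (hv : v ∈ K) (hmin : ∀ w ∈ K, ‖u - v‖ ≤ ‖u - w‖) {w : E} (hw : w ∈ K) :
    ⟪u - v, w - v⟫ = 0 := by
  have hle :=
    real_inner_sub_le_zero_of_forall_norm_sub_le (convex_of_forall_lineMap_mem hK) hv hmin
  have hreflect : (2 : ℝ) • v + (1 - (2 : ℝ)) • w - v = -(w - v) := by module
  have hge := hle _ (hK v hv w hw 2)
  rw [hreflect, inner_neg_right] at hge
  linarith [hle w hw]

lemma norm_sub_sq_eq_of_forall_norm_sub_le {K : Set E}
    (hK : ∀ x ∈ K, ∀ y ∈ K, ∀ t : ℝ, t • x + (1 - t) • y ∈ K) {u v : E}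
    (hv : v ∈ K) (hmin : ∀ w ∈ K, ‖u - v‖ ≤ ‖u - w‖) {w : E} (hw : w ∈ K) :
    ‖u - w‖ ^ 2 = ‖u - v‖ ^ 2 + ‖v - w‖ ^ 2 := by
  have horth : ⟪u - v, v - w⟫ = 0 := by
    rw [← neg_sub w v, inner_neg_right,
      real_inner_sub_eq_zero_of_forall_norm_sub_le hK hv hmin hw, neg_zero]
  have hpyth := norm_add_sq_eq_norm_sq_add_norm_sq_real horth
  rw [sub_add_sub_cancel] at hpyth
  simpa only [sq] using hpyth

end Projection

lemma FirmlyNonexpansive.norm_sub_fixedPoint_sq_le {n : ℕ}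
    {T : EuclideanSpace ℝ (Fin n) → EuclideanSpace ℝ (Fin n)} (hT : FirmlyNonexpansive T)
    (x : EuclideanSpace ℝ (Fin n)) {y : EuclideanSpace ℝ (Fin n)} (hy : T y = y) :
    ‖T x - y‖ ^ 2 ≤ ‖x - y‖ ^ 2 - ‖T x - x‖ ^ 2 := by
  simpa only [hy, sub_sub_sub_cancel_right] using hT x y

theorem map_step_fejer_general {n : ℕ}
    (T : EuclideanSpace ℝ (Fin n) → EuclideanSpace ℝ (Fin n))
    (hT : FirmlyNonexpansive T)
    (U : Set (EuclideanSpace ℝ (Fin n)))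
    (hUaff : ∀ x ∈ U, ∀ y ∈ U, ∀ t : ℝ, t • x + (1 - t) • y ∈ U)
    (PU : EuclideanSpace ℝ (Fin n) → EuclideanSpace ℝ (Fin n))
    (hPU : IsProjOn U PU)
    (x y : EuclideanSpace ℝ (Fin n)) (hyT : T y = y) (hyU : y ∈ U) :
    ‖PU (T x) - y‖ ^ 2 ≤ ‖x - y‖ ^ 2 - ‖T x - x‖ ^ 2 - ‖PU (T x) - T x‖ ^ 2 := by
  have hfirm := hT.norm_sub_fixedPoint_sq_le x hyT
  have hpyth := norm_sub_sq_eq_of_forall_norm_sub_le hUaff (hPU (T x)).1 (hPU (T x)).2 hyU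
  rw [norm_sub_rev (PU (T x)) (T x)]
  linarith

/-- For a firmly nonexpansive `T` and the projection `P_U` onto an affine subspace `U`:
`‖P_U(T(x)) − y‖² ≤ ‖x − y‖² − ‖T(x) − x‖² − ‖P_U(T(x)) − T(x)‖²`
for all `x` and all common fixed points `y` of `T` and `P_U`. -/
theorem map_step_fejer {n : ℕ}
    (T : EuclideanSpace ℝ (Fin n) → EuclideanSpace ℝ (Fin n))
    (hT : FirmlyNonexpansive T)
    (U : Set (EuclideanSpace ℝ (Fin n))) (hUne : U.Nonempty)
    (hUaff : ∀ x ∈ U, ∀ y ∈ U, ∀ t : ℝ, t • x + (1 - t) • y ∈ U)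
    (PU : EuclideanSpace ℝ (Fin n) → EuclideanSpace ℝ (Fin n))
    (hPU : IsProjOn U PU)
    (x y : EuclideanSpace ℝ (Fin n)) (hyT : T y = y) (hyU : y ∈ U) :
    ‖PU (T x) - y‖ ^ 2 ≤ ‖x - y‖ ^ 2 - ‖T x - x‖ ^ 2 - ‖PU (T x) - T x‖ ^ 2 :=
  map_step_fejer_general T hT U hUaff PU hPU x y hyT hyU
end

section
/- Assume Fix(T, P_U) ≠ ∅. Then for any starting point z⁰ ∈ ℝⁿ, the sequence defined by z^{k+1} = P_U(T(z^k)) converges to a point z̄ ∈ Fix(T, P_U). -/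
/-!
Every common fixed point `w` of `T` and `P_U` satisfies
`‖z^{k+1} - w‖² + ‖T z^k - z^k‖² ≤ ‖z^k - w‖²`, since `T` is firmly nonexpansive and so is
the projection onto the convex set `U`. Hence the sequence is Fejér monotone with respect to
`Fix(T, P_U)` and, by telescoping, `T z^k - z^k → 0`. A bounded sequence in `ℝⁿ` has a convergent
subsequence; its limit is fixed by the continuous map `T` and lies in the closed set `U`, and
Fejér monotonicity upgrades convergence of the subsequence to convergence of the whole sequence.
-/

open Filter Topology RealInnerProductSpace

def FejerMonotone {X : Type*} [PseudoMetricSpace X] (z : ℕ → X) (F : Set X) : Prop :=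
  ∀ w ∈ F, Antitone fun k => dist (z k) w

namespace FejerMonotone

variable {X : Type*} [PseudoMetricSpace X] {z : ℕ → X} {F : Set X}

theorem tendsto_of_tendsto_subseq (hz : FejerMonotone z F) {x : X} (hx : x ∈ F) {φ : ℕ → ℕ}
    (hφ : StrictMono φ) (h : Tendsto (z ∘ φ) atTop (𝓝 x)) : Tendsto z atTop (𝓝 x) := by
  rw [tendsto_iff_dist_tendsto_zero] at h ⊢
  exact (tendsto_iff_tendsto_subseq_of_antitone (hz x hx) hφ.tendsto_atTop).2 h

theorem exists_tendsto [ProperSpace X] (hz : FejerMonotone z F) (hF : F.Nonempty)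
    (hcluster : ∀ x (φ : ℕ → ℕ), StrictMono φ → Tendsto (z ∘ φ) atTop (𝓝 x) → x ∈ F) :
    ∃ x ∈ F, Tendsto z atTop (𝓝 x) := by
  obtain ⟨w, hw⟩ := hF
  have hbdd : ∀ k, z k ∈ Metric.closedBall w (dist (z 0) w) := fun k => hz w hw (Nat.zero_le k)
  obtain ⟨x, -, φ, hφ, hx⟩ := tendsto_subseq_of_bounded Metric.isBounded_closedBall hbdd
  have hxF := hcluster x φ hφ hx
  exact ⟨x, hxF, hz.tendsto_of_tendsto_subseq hxF hφ hx⟩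

end FejerMonotone

theorem summable_of_succ_add_le {a b : ℕ → ℝ} (ha : ∀ k, 0 ≤ a k) (hb : ∀ k, 0 ≤ b k)
    (h : ∀ k, a (k + 1) + b k ≤ a k) : Summable b := by
  have htele : ∀ n, ∑ i ∈ Finset.range n, b i ≤ a 0 - a n := by
    intro n
    induction n with
    | zero => simp
    | succ n ih => rw [Finset.sum_range_succ]; linarith [h n]
  exact summable_of_sum_range_le hb fun n => (htele n).trans (by linarith [ha n])

theorem isFixedPt_of_tendsto_sub {ι E : Type*} [NormedAddCommGroup E] {l : Filter ι} [l.NeBot]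
    {f : E → E} (hf : Continuous f) {x : ι → E} {p : E} (hx : Tendsto x l (𝓝 p))
    (hfx : Tendsto (fun k => f (x k) - x k) l (𝓝 0)) : Function.IsFixedPt f p :=
  tendsto_nhds_unique ((hf.tendsto p).comp hx) (by simpa [Function.comp_def] using hfx.add hx)

section Euclidean

variable {n : ℕ} {T P : EuclideanSpace ℝ (Fin n) → EuclideanSpace ℝ (Fin n)}
  {U : Set (EuclideanSpace ℝ (Fin n))}

namespace FirmlyNonexpansive

theorem norm_sub_sq_add_le (hT : FirmlyNonexpansive T) (x y : EuclideanSpace ℝ (Fin n)) :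
    ‖T x - T y‖ ^ 2 + ‖(T x - T y) - (x - y)‖ ^ 2 ≤ ‖x - y‖ ^ 2 := by
  linarith [hT x y]

theorem norm_sub_le (hT : FirmlyNonexpansive T) (x y : EuclideanSpace ℝ (Fin n)) :
    ‖T x - T y‖ ≤ ‖x - y‖ :=
  (pow_le_pow_iff_left₀ (norm_nonneg _) (norm_nonneg _) two_ne_zero).1 <| by
    linarith [hT.norm_sub_sq_add_le x y, sq_nonneg ‖(T x - T y) - (x - y)‖]

theorem continuous (hT : FirmlyNonexpansive T) : Continuous T :=
  (LipschitzWith.of_dist_le_mul (K := 1) fun x y => by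
    simpa [dist_eq_norm] using hT.norm_sub_le x y).continuous

theorem norm_comp_sub_sq_add_le (hT : FirmlyNonexpansive T) (hP : FirmlyNonexpansive P)
    {w : EuclideanSpace ℝ (Fin n)} (hwT : T w = w) (hwP : P w = w)
    (x : EuclideanSpace ℝ (Fin n)) : ‖P (T x) - w‖ ^ 2 + ‖T x - x‖ ^ 2 ≤ ‖x - w‖ ^ 2 := by
  have hTx := hT.norm_sub_sq_add_le x w
  rw [hwT, sub_sub_sub_cancel_right] at hTx
  have hPTx := hP.norm_sub_le (T x) w
  rw [hwP] at hPTx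
  nlinarith [norm_nonneg (P (T x) - w)]

end FirmlyNonexpansive

namespace IsProjOn

theorem apply_eq_self (hP : IsProjOn U P) {u : EuclideanSpace ℝ (Fin n)} (hu : u ∈ U) :
    P u = u := by
  have h := (hP u).2 u hu
  rw [sub_self, norm_zero, norm_le_zero_iff, sub_eq_zero] at h
  exact h.symm

theorem inner_sub_nonpos (hU : Convex ℝ U) (hP : IsProjOn U P) (x : EuclideanSpace ℝ (Fin n))
    {y : EuclideanSpace ℝ (Fin n)} (hy : y ∈ U) : ⟪x - P x, y - P x⟫ ≤ 0 := by
  refine (norm_eq_iInf_iff_real_inner_le_zero hU (hP x).1).1 ?_ y hy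
  have : Nonempty U := ⟨⟨P x, (hP x).1⟩⟩
  have hbdd : BddBelow (Set.range fun w : U => ‖x - w‖) := ⟨0, by rintro _ ⟨w, rfl⟩; positivity⟩
  exact le_antisymm (le_ciInf fun w => (hP x).2 w w.2) (ciInf_le hbdd ⟨P x, (hP x).1⟩)

theorem firmlyNonexpansive (hU : Convex ℝ U) (hP : IsProjOn U P) : FirmlyNonexpansive P := by
  intro a b
  have ha := hP.inner_sub_nonpos hU a (hP b).1
  have hb := hP.inner_sub_nonpos hU b (hP a).1
  have hsum : ⟪a - P a, P b - P a⟫ + ⟪b - P b, P a - P b⟫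
      = ‖P a - P b‖ ^ 2 - ⟪P a - P b, a - b⟫ := by
    rw [← real_inner_self_eq_norm_sq]
    simp only [inner_sub_left, inner_sub_right, real_inner_comm]
    ring
  rw [norm_sub_sq_real (P a - P b) (a - b)]
  linarith

theorem isClosed (hU : Convex ℝ U) (hP : IsProjOn U P) : IsClosed U := by
  have hfix : U = Function.fixedPoints P :=
    Set.ext fun x => ⟨hP.apply_eq_self, fun h => h ▸ (hP x).1⟩
  rw [hfix]
  exact isClosed_fixedPoints (hP.firmlyNonexpansive hU).continuous

end IsProjOn

end Euclidean

theorem map_converges_general {n : ℕ}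
    (T : EuclideanSpace ℝ (Fin n) → EuclideanSpace ℝ (Fin n))
    (hT : FirmlyNonexpansive T)
    (U : Set (EuclideanSpace ℝ (Fin n)))
    (hUaff : ∀ x ∈ U, ∀ y ∈ U, ∀ t : ℝ, t • x + (1 - t) • y ∈ U)
    (PU : EuclideanSpace ℝ (Fin n) → EuclideanSpace ℝ (Fin n))
    (hPU : IsProjOn U PU)
    (hfix : ∃ y, T y = y ∧ y ∈ U)
    (z : ℕ → EuclideanSpace ℝ (Fin n))
    (hz : ∀ k, z (k + 1) = PU (T (z k))) :
    ∃ zbar, (T zbar = zbar ∧ zbar ∈ U) ∧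
      Filter.Tendsto z Filter.atTop (nhds zbar) := by
  have hU : Convex ℝ U := fun a ha b hb s t _ _ hst => by
    obtain rfl : t = 1 - s := by linarith
    exact hUaff a ha b hb s
  have hdesc : ∀ w, T w = w ∧ w ∈ U → ∀ k,
      ‖z (k + 1) - w‖ ^ 2 + ‖T (z k) - z k‖ ^ 2 ≤ ‖z k - w‖ ^ 2 :=
    fun w hw k => hz k ▸ hT.norm_comp_sub_sq_add_le (hPU.firmlyNonexpansive hU) hw.1
      (hPU.apply_eq_self hw.2) (z k)
  have hfejer : FejerMonotone z {w | T w = w ∧ w ∈ U} := fun w hw =>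
    antitone_nat_of_succ_le fun k => by
      simp only [dist_eq_norm]
      exact (pow_le_pow_iff_left₀ (norm_nonneg _) (norm_nonneg _) two_ne_zero).1 <| by
        linarith [hdesc w hw k, sq_nonneg ‖T (z k) - z k‖]
  obtain ⟨y, hy⟩ := hfix
  have hreg : Tendsto (fun k => T (z k) - z k) atTop (𝓝 0) := by
    have hsq := (summable_of_succ_add_le (fun k => sq_nonneg ‖z k - y‖)
      (fun k => sq_nonneg ‖T (z k) - z k‖) (hdesc y hy)).tendsto_atTop_zero
    simpa [tendsto_zero_iff_norm_tendsto_zero] using hsq.sqrt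
  have hzU : ∀ᶠ k in atTop, z k ∈ U := (eventually_ge_atTop 1).mono fun k hk =>
    Nat.sub_add_cancel hk ▸ hz (k - 1) ▸ (hPU _).1
  exact hfejer.exists_tendsto ⟨y, hy⟩ fun x φ hφ hx =>
    ⟨isFixedPt_of_tendsto_sub hT.continuous hx (hreg.comp hφ.tendsto_atTop),
      (hPU.isClosed hU).mem_of_tendsto hx (hφ.tendsto_atTop.eventually hzU)⟩

/-- If `Fix(T, P_U) ≠ ∅`, the MAP sequence `z^{k+1} = P_U(T(z^k))` converges to a common
fixed point of `T` and `P_U`, from any starting point. -/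
theorem map_converges {n : ℕ}
    (T : EuclideanSpace ℝ (Fin n) → EuclideanSpace ℝ (Fin n))
    (hT : FirmlyNonexpansive T)
    (U : Set (EuclideanSpace ℝ (Fin n))) (hUne : U.Nonempty)
    (hUaff : ∀ x ∈ U, ∀ y ∈ U, ∀ t : ℝ, t • x + (1 - t) • y ∈ U)
    (PU : EuclideanSpace ℝ (Fin n) → EuclideanSpace ℝ (Fin n))
    (hPU : IsProjOn U PU)
    (hfix : ∃ y, T y = y ∧ y ∈ U)
    (z : ℕ → EuclideanSpace ℝ (Fin n))
    (hz : ∀ k, z (k + 1) = PU (T (z k))) :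
    ∃ zbar, (T zbar = zbar ∧ zbar ∈ U) ∧
      Filter.Tendsto z Filter.atTop (nhds zbar) :=
  map_converges_general T hT U hUaff PU hPU hfix z hz
end

section
/- Let z ∈ U and suppose c ∈ ℝⁿ is a circumcenter for z, i.e. c belongs to the affine span of {z, R(z), R_U(R(z))} and ‖c − z‖ = ‖c − R(z)‖ = ‖c − R_U(R(z))‖. Then c ∈ U. -/
open RealInnerProductSpace

/-!
Write `w = R z` and `p = P_U w`, so that `R_U w = 2p - w`. Since `U` is affine, `w - p` is
orthogonal to `z - p`. The circumcenter `c` is equidistant from `w` and its reflection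
`2p - w`, hence `c - p ⟂ w - p`; on the other hand `c - p` lies in the span of `z - p` and
`w - p`. So `c - p` is a multiple of `z - p`, i.e. `c` lies on the line through `p, z ∈ U`.
-/

theorem exists_eq_add_smul_sub_add_smul_sub_of_mem_affineSpan {k V : Type*} [Ring k]
    [AddCommGroup V] [Module k V] {x y z c : V} (hc : c ∈ affineSpan k {x, y, z}) :
    ∃ s t : k, c = x + s • (y - x) + t • (z - x) := by
  have hx : x ∈ ({x, y, z} : Set V) := Set.mem_insert _ _
  have hd := AffineSubspace.vsub_mem_direction hc (mem_affineSpan k hx)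
  rw [direction_affineSpan, vectorSpan_eq_span_vsub_set_right k hx] at hd
  simp only [Set.image_insert_eq, Set.image_singleton, vsub_eq_sub, sub_self,
    Submodule.span_insert_zero, Submodule.mem_span_pair] at hd
  obtain ⟨s, t, hst⟩ := hd
  exact ⟨s, t, by rw [add_assoc, hst, add_sub_cancel]⟩

theorem convex_of_forall_smul_add_one_sub_smul_mem {E : Type*} [AddCommGroup E] [Module ℝ E]
    {U : Set E} (hU : ∀ x ∈ U, ∀ y ∈ U, ∀ t : ℝ, t • x + (1 - t) • y ∈ U) : Convex ℝ U := by
  intro x hx y hy a b _ _ hab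
  obtain rfl : b = 1 - a := by linarith
  exact hU x hx y hy a

theorem inner_sub_sub_eq_zero_of_forall_norm_sub_le {F : Type*} [NormedAddCommGroup F]
    [InnerProductSpace ℝ F] {U : Set F}
    (hU : ∀ x ∈ U, ∀ y ∈ U, ∀ t : ℝ, t • x + (1 - t) • y ∈ U) {w p : F} (hp : p ∈ U)
    (hmin : ∀ y ∈ U, ‖w - p‖ ≤ ‖w - y‖) {u : F} (hu : u ∈ U) :
    ⟪w - p, u - p⟫ = 0 := by
  have : Nonempty U := ⟨⟨p, hp⟩⟩
  have hbdd : BddBelow (Set.range fun y : U ↦ ‖w - y‖) := ⟨0, by rintro _ ⟨y, rfl⟩; positivity⟩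
  have hinf : ‖w - p‖ = ⨅ y : U, ‖w - y‖ :=
    le_antisymm (le_ciInf fun y ↦ hmin y y.2) (ciInf_le hbdd ⟨p, hp⟩)
  have hle := (norm_eq_iInf_iff_real_inner_le_zero
    (convex_of_forall_smul_add_one_sub_smul_mem hU) hp).1 hinf
  -- `U` is affine, not just convex: the variational inequality also holds at `2p - u`
  have hrefl : ⟪w - p, ((-1 : ℝ) • u + (1 - -1 : ℝ) • p) - p⟫ = -⟪w - p, u - p⟫ := by
    rw [← inner_neg_right]; congr 1; module
  linarith [hle u hu, hrefl ▸ hle _ (hU u hu p hp (-1))]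

theorem exists_eq_smul_add_one_sub_smul_of_mem_affineSpan_reflection {F : Type*}
    [NormedAddCommGroup F] [InnerProductSpace ℝ F] {z w p c : F}
    (horth : ⟪w - p, z - p⟫ = 0) (hspan : c ∈ affineSpan ℝ {z, w, (2 : ℝ) • p - w})
    (hdist : ‖c - w‖ = ‖c - ((2 : ℝ) • p - w)‖) :
    ∃ t : ℝ, c = t • p + (1 - t) • z := by
  have hperp : ⟪c - p, w - p⟫ = 0 := by
    have hrefl : Equiv.pointReflection p w = (2 : ℝ) • p - w := by
      rw [Equiv.pointReflection_apply, vsub_eq_sub, vadd_eq_add]; module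
    have hbis : c ∈ AffineSubspace.perpBisector w (Equiv.pointReflection p w) := by
      rw [AffineSubspace.mem_perpBisector_iff_dist_eq, hrefl, dist_eq_norm, dist_eq_norm]
      exact hdist
    exact AffineSubspace.mem_perpBisector_pointReflection_iff_inner_eq_zero.1 hbis
  obtain ⟨s, t, rfl⟩ := exists_eq_add_smul_sub_add_smul_sub_of_mem_affineSpan hspan
  have hc : z + s • (w - z) + t • ((2 : ℝ) • p - w - z) - p
      = (1 - s - t) • (z - p) + (s - t) • (w - p) := by module
  rw [hc, inner_add_left, real_inner_smul_left, real_inner_smul_left, real_inner_comm, horth,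
    mul_zero, zero_add] at hperp
  have hzero : (s - t) • (w - p) = 0 :=
    smul_eq_zero.2 ((mul_eq_zero.1 hperp).imp_right inner_self_eq_zero.1)
  exact ⟨s + t, by linear_combination (norm := module) hzero⟩

theorem circumcenter_mem_affine_general {n : ℕ}
    (U : Set (EuclideanSpace ℝ (Fin n)))
    (hUaff : ∀ x ∈ U, ∀ y ∈ U, ∀ t : ℝ, t • x + (1 - t) • y ∈ U)
    (PU : EuclideanSpace ℝ (Fin n) → EuclideanSpace ℝ (Fin n))
    (hPU : IsProjOn U PU)
    (R RU : EuclideanSpace ℝ (Fin n) → EuclideanSpace ℝ (Fin n))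
    (hRU : ∀ x, RU x = (2 : ℝ) • PU x - x)
    (z c : EuclideanSpace ℝ (Fin n)) (hz : z ∈ U)
    (hspan : c ∈ affineSpan ℝ ({z, R z, RU (R z)} : Set (EuclideanSpace ℝ (Fin n))))
    (h1 : ‖c - z‖ = ‖c - R z‖) (h2 : ‖c - z‖ = ‖c - RU (R z)‖) :
    c ∈ U := by
  obtain ⟨hpU, hmin⟩ := hPU (R z)
  rw [hRU] at hspan h2
  have horth := inner_sub_sub_eq_zero_of_forall_norm_sub_le hUaff hpU hmin hz
  obtain ⟨t, rfl⟩ :=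
    exists_eq_smul_add_one_sub_smul_of_mem_affineSpan_reflection horth hspan (h1.symm.trans h2)
  exact hUaff _ hpU z hz t

/-- If `z ∈ U` and `c` is a circumcenter of `z`, `R(z)`, `R_U(R(z))` (where
`R = 2T − I` and `R_U = 2P_U − I`), then `c ∈ U`. -/
theorem circumcenter_mem_affine {n : ℕ}
    (T : EuclideanSpace ℝ (Fin n) → EuclideanSpace ℝ (Fin n))
    (hT : FirmlyNonexpansive T)
    (U : Set (EuclideanSpace ℝ (Fin n))) (hUne : U.Nonempty)
    (hUaff : ∀ x ∈ U, ∀ y ∈ U, ∀ t : ℝ, t • x + (1 - t) • y ∈ U)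
    (PU : EuclideanSpace ℝ (Fin n) → EuclideanSpace ℝ (Fin n))
    (hPU : IsProjOn U PU)
    (R RU : EuclideanSpace ℝ (Fin n) → EuclideanSpace ℝ (Fin n))
    (hR : ∀ x, R x = (2 : ℝ) • T x - x) (hRU : ∀ x, RU x = (2 : ℝ) • PU x - x)
    (z c : EuclideanSpace ℝ (Fin n)) (hz : z ∈ U)
    (hspan : c ∈ affineSpan ℝ ({z, R z, RU (R z)} : Set (EuclideanSpace ℝ (Fin n))))
    (h1 : ‖c - z‖ = ‖c - R z‖) (h2 : ‖c - z‖ = ‖c - RU (R z)‖) :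
    c ∈ U :=
  circumcenter_mem_affine_general U hUaff PU hPU R RU hRU z c hz hspan h1 h2
end

section
/- Let x ∈ U and suppose c ∈ ℝⁿ is a circumcenter for x, i.e. c belongs to the affine span of {x, R(x), R_U(R(x))} and ‖c − x‖ = ‖c − R(x)‖ = ‖c − R_U(R(x))‖. Then S(x) = P_U(T(x)) belongs to the segment between x and c, i.e. there exists t ∈ [0, 1] with S(x) = (1 − t)x + tc. -/
open RealInnerProductSpace

private lemma inner_eq_zero_of_forall_norm_le {n : ℕ}
    (v w : EuclideanSpace ℝ (Fin n)) (h : ∀ t : ℝ, ‖v‖ ≤ ‖v - t • w‖) :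
    ⟪v, w⟫ = 0 := by
  by_cases hw : w = 0
  · simp [hw]
  · have hwn : ‖w‖ ≠ 0 := norm_ne_zero_iff.mpr hw
    have hw2 : (0:ℝ) < ‖w‖ ^ 2 := by positivity
    have key : ∀ t : ℝ, 0 ≤ t ^ 2 * ‖w‖ ^ 2 - 2 * (t * ⟪v, w⟫) := by
      intro t
      have h1 : ‖v‖ ^ 2 ≤ ‖v - t • w‖ ^ 2 := by
        have ht := h t
        nlinarith [norm_nonneg v, norm_nonneg (v - t • w)]
      rw [norm_sub_sq_real, real_inner_smul_right, norm_smul, Real.norm_eq_abs, mul_pow,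
        sq_abs] at h1
      linarith
    have h3 := key (⟪v, w⟫ / ‖w‖ ^ 2)
    have h4 : (⟪v, w⟫ / ‖w‖ ^ 2) ^ 2 * ‖w‖ ^ 2 - 2 * ((⟪v, w⟫ / ‖w‖ ^ 2) * ⟪v, w⟫)
        = -(⟪v, w⟫ ^ 2 / ‖w‖ ^ 2) := by
      field_simp; ring
    rw [h4] at h3
    have h5 : ⟪v, w⟫ ^ 2 ≤ 0 := by
      rcases div_nonpos_iff.mp (neg_nonneg.mp h3) with ⟨_, h⟩ | ⟨h, _⟩
      · nlinarith
      · exact h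
    have h6 : ⟪v, w⟫ ^ 2 = 0 := le_antisymm h5 (sq_nonneg _)
    exact pow_eq_zero_iff (by norm_num) |>.mp h6

private lemma projOn_inner_eq_zero {n : ℕ} {U : Set (EuclideanSpace ℝ (Fin n))}
    (hUaff : ∀ x ∈ U, ∀ y ∈ U, ∀ t : ℝ, t • x + (1 - t) • y ∈ U)
    {PU : EuclideanSpace ℝ (Fin n) → EuclideanSpace ℝ (Fin n)}
    (hPU : IsProjOn U PU)
    (z : EuclideanSpace ℝ (Fin n)) {u v : EuclideanSpace ℝ (Fin n)}
    (hu : u ∈ U) (hv : v ∈ U) : ⟪z - PU z, u - v⟫ = 0 := by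
  have key : ∀ w ∈ U, ⟪z - PU z, w - PU z⟫ = 0 := by
    intro w hw
    apply inner_eq_zero_of_forall_norm_le
    intro t
    have hq : t • w + (1 - t) • PU z ∈ U := hUaff w hw (PU z) (hPU z).1 t
    have hle := (hPU z).2 _ hq
    have heq : z - (t • w + (1 - t) • PU z) = (z - PU z) - t • (w - PU z) := by module
    rwa [heq] at hle
  have h3 : (u - PU z) - (v - PU z) = u - v := by abel
  have : ⟪z - PU z, (u - PU z) - (v - PU z)⟫ = 0 := by
    rw [inner_sub_right, key u hu, key v hv]; ring
  rwa [h3] at this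

private lemma inner_of_norm_eq {n : ℕ} (d w : EuclideanSpace ℝ (Fin n))
    (h : ‖d‖ = ‖d - w‖) : 2 * ⟪d, w⟫ = ‖w‖ ^ 2 := by
  have h2 : ‖d‖ ^ 2 = ‖d - w‖ ^ 2 := by rw [h]
  rw [norm_sub_sq_real] at h2
  linarith

private lemma segment_coeff {n : ℕ} (a s d : EuclideanSpace ℝ (Fin n))
    (has : ⟪a, s⟫ = ‖s‖ ^ 2)
    (hda : ⟪d, a⟫ = ‖a‖ ^ 2)
    (hds : ⟪d, s⟫ = ‖a‖ ^ 2)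
    (hspan : ∃ A B : ℝ, d = A • a + B • s) :
    ∃ t ∈ Set.Icc (0:ℝ) 1, s = t • d := by
  obtain ⟨A, B, hAB⟩ := hspan
  by_cases ha0 : a = 0
  · have hs2 : ‖s‖ ^ 2 = 0 := by rw [← has, ha0]; simp
    have hs0 : s = 0 := norm_eq_zero.mp (pow_eq_zero_iff (by norm_num) |>.mp hs2)
    exact ⟨0, ⟨le_refl 0, zero_le_one⟩, by simp [hs0]⟩
  · have han : ‖a‖ ≠ 0 := norm_ne_zero_iff.mpr ha0
    have ha2 : (0:ℝ) < ‖a‖ ^ 2 := by positivity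
    have hsa : ⟪s, a⟫ = ‖s‖ ^ 2 := by rw [real_inner_comm, has]
    have e1 : A * ‖a‖ ^ 2 + B * ‖s‖ ^ 2 = ‖a‖ ^ 2 := by
      rw [hAB, inner_add_left, real_inner_smul_left, real_inner_smul_left,
        real_inner_self_eq_norm_sq, hsa] at hda
      linarith
    have e2 : (A + B) * ‖s‖ ^ 2 = ‖a‖ ^ 2 := by
      rw [hAB, inner_add_left, real_inner_smul_left, real_inner_smul_left,
        real_inner_self_eq_norm_sq, has] at hds
      linarith
    have hnorm : ‖a - s‖ ^ 2 = ‖a‖ ^ 2 - ‖s‖ ^ 2 := by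
      rw [norm_sub_sq_real, has]; ring
    have e3 : A * ‖a - s‖ ^ 2 = 0 := by
      rw [hnorm]; linear_combination e1 - e2
    have hAas : A • (a - s) = (0 : EuclideanSpace ℝ (Fin n)) := by
      rcases mul_eq_zero.mp e3 with h | h
      · rw [h, zero_smul]
      · rw [norm_eq_zero.mp (pow_eq_zero_iff (by norm_num) |>.mp h), smul_zero]
    have hAa : A • a = A • s := by rwa [smul_sub, sub_eq_zero] at hAas
    have key : ‖a‖ ^ 2 • s = ‖s‖ ^ 2 • d := by
      rw [hAB, smul_add, smul_smul, smul_smul]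
      have hx : (‖s‖ ^ 2 * A) • a = (‖s‖ ^ 2 * A) • s := by
        rw [mul_smul, hAa, ← mul_smul]
      rw [hx, ← add_smul]
      congr 1
      linear_combination -e2
    refine ⟨‖s‖ ^ 2 / ‖a‖ ^ 2, ⟨div_nonneg (by positivity) (le_of_lt ha2), ?_⟩, ?_⟩
    · rw [div_le_one ha2]
      nlinarith [sq_nonneg ‖a - s‖]
    · rw [div_eq_inv_mul, mul_smul, ← key, smul_smul,
        inv_mul_cancel₀ (ne_of_gt ha2), one_smul]

/-- If `x ∈ U` and `c` is a circumcenter of `x`, `R(x)`, `R_U(R(x))`, then the MAP point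
`S(x) = P_U(T(x))` lies on the segment between `x` and `c`. -/
theorem map_point_mem_segment {n : ℕ}
    (T : EuclideanSpace ℝ (Fin n) → EuclideanSpace ℝ (Fin n))
    (hT : FirmlyNonexpansive T)
    (U : Set (EuclideanSpace ℝ (Fin n))) (hUne : U.Nonempty)
    (hUaff : ∀ x ∈ U, ∀ y ∈ U, ∀ t : ℝ, t • x + (1 - t) • y ∈ U)
    (PU : EuclideanSpace ℝ (Fin n) → EuclideanSpace ℝ (Fin n))
    (hPU : IsProjOn U PU)
    (R RU : EuclideanSpace ℝ (Fin n) → EuclideanSpace ℝ (Fin n))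
    (hR : ∀ w, R w = (2 : ℝ) • T w - w) (hRU : ∀ w, RU w = (2 : ℝ) • PU w - w)
    (x c : EuclideanSpace ℝ (Fin n)) (hx : x ∈ U)
    (hspan : c ∈ affineSpan ℝ ({x, R x, RU (R x)} : Set (EuclideanSpace ℝ (Fin n))))
    (h1 : ‖c - x‖ = ‖c - R x‖) (h2 : ‖c - x‖ = ‖c - RU (R x)‖) :
    ∃ t ∈ Set.Icc (0 : ℝ) 1, PU (T x) = (1 - t) • x + t • c := by
  have hSU : PU (T x) ∈ U := (hPU (T x)).1
  -- orthogonality at T x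
  have has : ⟪T x - x, PU (T x) - x⟫ = ‖PU (T x) - x‖ ^ 2 := by
    have h0 : ⟪T x - PU (T x), PU (T x) - x⟫ = 0 :=
      projOn_inner_eq_zero hUaff hPU (T x) hSU hx
    have hrw : T x - PU (T x) = (T x - x) - (PU (T x) - x) := by abel
    rw [hrw, inner_sub_left, real_inner_self_eq_norm_sq] at h0
    linarith
  -- projection of R x
  have hPRx : PU (R x) = (2:ℝ) • PU (T x) - x := by
    have hpU : (2:ℝ) • PU (T x) - x ∈ U := by
      have := hUaff (PU (T x)) hSU x hx 2
      have heq : (2:ℝ) • PU (T x) + (1 - (2:ℝ)) • x = (2:ℝ) • PU (T x) - x := by module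
      rwa [heq] at this
    have hqU : PU (R x) ∈ U := (hPU (R x)).1
    have hle : ‖R x - PU (R x)‖ ≤ ‖R x - ((2:ℝ) • PU (T x) - x)‖ := (hPU (R x)).2 _ hpU
    have horth : ⟪R x - ((2:ℝ) • PU (T x) - x), PU (R x) - ((2:ℝ) • PU (T x) - x)⟫ = 0 := by
      have hinner : ⟪T x - PU (T x), PU (R x) - ((2:ℝ) • PU (T x) - x)⟫ = 0 :=
        projOn_inner_eq_zero hUaff hPU (T x) hqU hpU
      have hrw : R x - ((2:ℝ) • PU (T x) - x) = (2:ℝ) • (T x - PU (T x)) := by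
        rw [hR]; module
      rw [hrw, real_inner_smul_left, hinner, mul_zero]
    have hexp : ‖R x - PU (R x)‖ ^ 2
        = ‖R x - ((2:ℝ) • PU (T x) - x)‖ ^ 2
          - 2 * ⟪R x - ((2:ℝ) • PU (T x) - x), PU (R x) - ((2:ℝ) • PU (T x) - x)⟫
          + ‖PU (R x) - ((2:ℝ) • PU (T x) - x)‖ ^ 2 := by
      have hd : R x - PU (R x)
          = (R x - ((2:ℝ) • PU (T x) - x)) - (PU (R x) - ((2:ℝ) • PU (T x) - x)) := by abel
      rw [hd, norm_sub_sq_real]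
    have hz : ‖PU (R x) - ((2:ℝ) • PU (T x) - x)‖ ^ 2 ≤ 0 := by
      nlinarith [norm_nonneg (R x - PU (R x)), norm_nonneg (R x - ((2:ℝ) • PU (T x) - x))]
    have hz2 : ‖PU (R x) - ((2:ℝ) • PU (T x) - x)‖ ^ 2 = 0 := le_antisymm hz (sq_nonneg _)
    have := norm_eq_zero.mp (pow_eq_zero_iff (by norm_num) |>.mp hz2)
    exact sub_eq_zero.mp this
  have hRx : R x - x = (2:ℝ) • (T x - x) := by rw [hR]; module
  have hRURx : RU (R x) - x = (4:ℝ) • (PU (T x) - x) - (2:ℝ) • (T x - x) := by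
    rw [hRU, hPRx, hR]; module
  -- circumcenter equations
  have hda : ⟪c - x, T x - x⟫ = ‖T x - x‖ ^ 2 := by
    have hcr : c - R x = (c - x) - (R x - x) := by abel
    have hinner1 : 2 * ⟪c - x, R x - x⟫ = ‖R x - x‖ ^ 2 :=
      inner_of_norm_eq _ _ (by rw [h1, hcr])
    rw [hRx, real_inner_smul_right, norm_smul, Real.norm_ofNat, mul_pow] at hinner1
    nlinarith [hinner1]
  have hds : ⟪c - x, PU (T x) - x⟫ = ‖T x - x‖ ^ 2 := by
    have hcr : c - RU (R x) = (c - x) - (RU (R x) - x) := by abel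
    have hinner2 : 2 * ⟪c - x, RU (R x) - x⟫ = ‖RU (R x) - x‖ ^ 2 :=
      inner_of_norm_eq _ _ (by rw [h2, hcr])
    rw [hRURx] at hinner2
    rw [inner_sub_right, real_inner_smul_right, real_inner_smul_right] at hinner2
    rw [norm_sub_sq_real, real_inner_smul_left, real_inner_smul_right, norm_smul, norm_smul,
      Real.norm_ofNat, Real.norm_ofNat, mul_pow, mul_pow] at hinner2
    nlinarith [hinner2, has, hda, real_inner_comm (PU (T x) - x) (T x - x),
      real_inner_comm (PU (T x) - x) (c - x)]
  -- span
  have hxmem : x ∈ ({x, R x, RU (R x)} : Set (EuclideanSpace ℝ (Fin n))) :=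
    Set.mem_insert _ _
  have hc0 : c -ᵥ x ∈ (affineSpan ℝ ({x, R x, RU (R x)} : Set (EuclideanSpace ℝ (Fin n)))).direction :=
    AffineSubspace.vsub_mem_direction hspan (subset_affineSpan ℝ _ hxmem)
  rw [direction_affineSpan, vectorSpan_eq_span_vsub_set_right ℝ hxmem] at hc0
  simp only [Set.image_insert_eq, Set.image_singleton, vsub_eq_sub, sub_self] at hc0
  rw [Submodule.span_insert_zero, Submodule.mem_span_pair] at hc0
  obtain ⟨α, β, hαβ⟩ := hc0
  have hspan2 : ∃ A B : ℝ, c - x = A • (T x - x) + B • (PU (T x) - x) := by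
    refine ⟨2*α - 2*β, 4*β, ?_⟩
    rw [← hαβ, hRx, hRURx]; module
  obtain ⟨t, htIcc, hts⟩ := segment_coeff (T x - x) (PU (T x) - x) (c - x) has hda hds hspan2
  refine ⟨t, htIcc, ?_⟩
  rw [sub_eq_iff_eq_add.mp hts]
  module
end

section
/- Let z ∈ U, let y ∈ Fix(T, P_U), and suppose c ∈ ℝⁿ is a circumcenter for z, i.e. c belongs to the affine span of {z, R(z), R_U(R(z))} and ‖c − z‖ = ‖c − R(z)‖ = ‖c − R_U(R(z))‖. Then ‖c − y‖ ≤ ‖S(z) − y‖, and consequently dist(c, Fix(T, P_U)) ≤ dist(S(z), Fix(T, P_U)). -/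
open RealInnerProductSpace

lemma norm_comb {E : Type*} [NormedAddCommGroup E] [InnerProductSpace ℝ E]
    (d h n : E) (hdn : ⟪d, n⟫ = 0) (hhn : ⟪h, n⟫ = 0) (r p q : ℝ) :
    ‖r • d + p • h + q • n‖ ^ 2 =
      r^2 * ⟪d,d⟫ + p^2*⟪h,h⟫ + q^2*⟪n,n⟫ + 2*r*p*⟪d,h⟫ := by
  have hnd : ⟪n, d⟫ = 0 := by rw [real_inner_comm]; exact hdn
  have hnh : ⟪n, h⟫ = 0 := by rw [real_inner_comm]; exact hhn
  rw [← real_inner_self_eq_norm_sq]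
  simp only [inner_add_left, inner_add_right, real_inner_smul_left, real_inner_smul_right,
    hdn, hhn, hnd, hnh, real_inner_comm h d]
  ring

lemma proj_orth {n : ℕ} {U : Set (EuclideanSpace ℝ (Fin n))}
    (hUaff : ∀ x ∈ U, ∀ y ∈ U, ∀ t : ℝ, t • x + (1 - t) • y ∈ U)
    {PU : EuclideanSpace ℝ (Fin n) → EuclideanSpace ℝ (Fin n)}
    (hPU : IsProjOn U PU) (x : EuclideanSpace ℝ (Fin n))
    {u : EuclideanSpace ℝ (Fin n)} (hu : u ∈ U) :
    ⟪x - PU x, u - PU x⟫ = 0 := by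
  have hpU : PU x ∈ U := (hPU x).1
  by_cases he : u - PU x = 0
  · rw [he, inner_zero_right]
  · set g := ⟪x - PU x, u - PU x⟫ with hg
    have hN : (0:ℝ) < ‖u - PU x‖^2 := pow_pos (norm_pos_iff.mpr he) 2
    set t := g / ‖u - PU x‖^2 with ht
    have hw : t • u + (1 - t) • PU x ∈ U := hUaff u hu (PU x) hpU t
    have hle := (hPU x).2 _ hw
    have hxw : x - (t • u + (1 - t) • PU x) = (x - PU x) - t • (u - PU x) := by module
    rw [hxw] at hle
    have hsq : ‖x - PU x‖^2 ≤ ‖(x - PU x) - t • (u - PU x)‖^2 :=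
      pow_le_pow_left₀ (norm_nonneg _) hle 2
    have hexp : ‖(x - PU x) - t • (u - PU x)‖^2
        = ‖x - PU x‖^2 - 2*(t*g) + t^2*‖u - PU x‖^2 := by
      rw [norm_sub_sq_real, real_inner_smul_right, norm_smul, mul_pow, Real.norm_eq_abs,
        sq_abs, ← hg]
    rw [hexp, ht] at hsq
    have hg2 : g^2 ≤ 0 := by
      have hNe : ‖u - PU x‖^2 ≠ 0 := ne_of_gt hN
      have e1 : (g / ‖u - PU x‖^2)^2 * ‖u - PU x‖^2 = g^2 / ‖u - PU x‖^2 := by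
        field_simp
      have e2 : g / ‖u - PU x‖^2 * g = g^2 / ‖u - PU x‖^2 := by
        field_simp
      rw [e2, e1] at hsq
      have h3 : g^2 / ‖u - PU x‖^2 ≤ 0 := by linarith
      have e3 : g^2 = (g^2 / ‖u - PU x‖^2) * ‖u - PU x‖^2 := by field_simp
      nlinarith [h3, hN, e3]
    have hg0 : g^2 = 0 := le_antisymm hg2 (sq_nonneg g)
    exact (pow_eq_zero_iff two_ne_zero).mp hg0

lemma scalar_key (A B C D P Q : ℝ) (hA : 0 ≤ A) (hB : 0 ≤ B) (hC : 0 ≤ C)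
    (hE1 : P^2*A + Q^2*B = (P-1)^2*A + (Q-1)^2*B)
    (hE2 : P^2*A + Q^2*B = (P-1)^2*A + (Q+1)^2*B)
    (hD : 2*D + A + B ≤ 0) (hCS : D^2 ≤ C*A) :
    C + P^2*A + Q^2*B + 2*P*D ≤ C + 4⁻¹*A + D := by
  have hQB : Q*B = 0 := by linarith [hE1, hE2]
  have hQ2B : Q^2*B = Q*(Q*B) := by ring
  have hPA : 2*P*A = A + B := by nlinarith [hE1, hQB]
  rcases eq_or_lt_of_le hA with hA0 | hApos
  · have hB0 : B = 0 := by nlinarith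
    have hD0 : D = 0 := by nlinarith
    rw [hQ2B, hQB]; nlinarith
  · have key : (4⁻¹*A + D - (P^2*A + 2*P*D)) * A
        = A^2*(P-2⁻¹)^2 + B*(-D-P*A) := by nlinarith [hPA]
    have hDP : 0 ≤ -D - P*A := by nlinarith [hPA]
    have h0 : 0 ≤ (4⁻¹*A + D - (P^2*A + 2*P*D)) * A := by
      rw [key]; positivity
    have := (mul_nonneg_iff_of_pos_right hApos).mp h0
    rw [hQ2B, hQB]; linarith

set_option maxHeartbeats 1000000

/-- If `z ∈ U`, `y ∈ Fix(T, P_U)` and `c` is a circumcenter of `z`, `R(z)`, `R_U(R(z))`,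
then `‖c − y‖ ≤ ‖S(z) − y‖` (with `S = P_U ∘ T`), and consequently
`dist(c, Fix(T, P_U)) ≤ dist(S(z), Fix(T, P_U))`. -/
theorem circumcenter_closer_than_map {n : ℕ}
    (T : EuclideanSpace ℝ (Fin n) → EuclideanSpace ℝ (Fin n))
    (hT : FirmlyNonexpansive T)
    (U : Set (EuclideanSpace ℝ (Fin n))) (hUne : U.Nonempty)
    (hUaff : ∀ x ∈ U, ∀ y ∈ U, ∀ t : ℝ, t • x + (1 - t) • y ∈ U)
    (PU : EuclideanSpace ℝ (Fin n) → EuclideanSpace ℝ (Fin n))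
    (hPU : IsProjOn U PU)
    (R RU : EuclideanSpace ℝ (Fin n) → EuclideanSpace ℝ (Fin n))
    (hR : ∀ w, R w = (2 : ℝ) • T w - w) (hRU : ∀ w, RU w = (2 : ℝ) • PU w - w)
    (z c y : EuclideanSpace ℝ (Fin n)) (hz : z ∈ U)
    (hy : T y = y ∧ y ∈ U)
    (hspan : c ∈ affineSpan ℝ ({z, R z, RU (R z)} : Set (EuclideanSpace ℝ (Fin n))))
    (h1 : ‖c - z‖ = ‖c - R z‖) (h2 : ‖c - z‖ = ‖c - RU (R z)‖) :
    ‖c - y‖ ≤ ‖PU (T z) - y‖ ∧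
      Metric.infDist c {w : EuclideanSpace ℝ (Fin n) | T w = w ∧ w ∈ U} ≤
        Metric.infDist (PU (T z)) {w : EuclideanSpace ℝ (Fin n) | T w = w ∧ w ∈ U} := by
  have horth : ∀ x : EuclideanSpace ℝ (Fin n), ∀ w1 ∈ U, ∀ w2 ∈ U,
      ⟪x - PU x, w1 - w2⟫ = 0 := by
    intro x w1 hw1 w2 hw2
    have a1 := proj_orth hUaff hPU x hw1
    have a2 := proj_orth hUaff hPU x hw2
    have hsub : w1 - w2 = (w1 - PU x) - (w2 - PU x) := by module
    rw [hsub, inner_sub_right, a1, a2, sub_zero]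
  have hsU : PU (T z) ∈ U := (hPU (T z)).1
  obtain ⟨q, hqdef⟩ : ∃ w, w = PU (R z) := ⟨_, rfl⟩
  obtain ⟨hv, hvdef⟩ : ∃ w, w = q - z := ⟨_, rfl⟩
  obtain ⟨ev, hevdef⟩ : ∃ w, w = R z - q := ⟨_, rfl⟩
  have hqU : q ∈ U := hqdef ▸ (hPU (R z)).1
  have h2Tz : (2:ℝ) • T z = R z + z := by rw [hR z]; module
  have hTz : T z = z + (2⁻¹:ℝ) • (hv + ev) := by
    rw [hvdef, hevdef]
    linear_combination (norm := module) (2⁻¹:ℝ) • h2Tz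
  obtain ⟨m, hmdef⟩ : ∃ w, w = (2⁻¹:ℝ) • z + (2⁻¹:ℝ) • q := ⟨_, rfl⟩
  have hmU : m ∈ U := by
    have h := hUaff z hz q hqU 2⁻¹
    have h12 : (1:ℝ) - 2⁻¹ = 2⁻¹ := by norm_num
    rw [h12] at h
    rw [hmdef]; exact h
  have hsm : PU (T z) = m := by
    have hTm : T z - m = (2⁻¹:ℝ) • ev := by
      rw [hTz, hmdef, hvdef]; module
    have hmo := horth (R z) m hmU (PU (T z)) hsU
    rw [← hqdef] at hmo
    have hinner : ⟪T z - m, m - PU (T z)⟫ = 0 := by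
      rw [hTm, real_inner_smul_left, hevdef, hmo, mul_zero]
    have hpyth : ‖T z - PU (T z)‖^2 = ‖T z - m‖^2 + ‖m - PU (T z)‖^2 := by
      have hd : T z - PU (T z) = (T z - m) + (m - PU (T z)) := by module
      rw [hd, norm_add_sq_real, hinner]; ring
    have hle : ‖T z - PU (T z)‖ ≤ ‖T z - m‖ := (hPU (T z)).2 m hmU
    have hle2 : ‖T z - PU (T z)‖^2 ≤ ‖T z - m‖^2 := pow_le_pow_left₀ (norm_nonneg _) hle 2
    have h0 : ‖m - PU (T z)‖ = 0 := by nlinarith [norm_nonneg (m - PU (T z))]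
    have := norm_eq_zero.mp h0
    exact (sub_eq_zero.mp this).symm
  -- span membership
  have hcz : c - z ∈ Submodule.span ℝ {R z - z, RU (R z) - z} := by
    have hzmem : z ∈ affineSpan ℝ ({z, R z, RU (R z)} : Set (EuclideanSpace ℝ (Fin n))) :=
      mem_affineSpan _ (by simp)
    have hdir := (AffineSubspace.vsub_right_mem_direction_iff_mem hzmem c).2 hspan
    rw [direction_affineSpan, vectorSpan_def] at hdir
    have hle : Submodule.span ℝ (({z, R z, RU (R z)} : Set (EuclideanSpace ℝ (Fin n))) -ᵥ
        ({z, R z, RU (R z)} : Set (EuclideanSpace ℝ (Fin n)))) ≤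
        Submodule.span ℝ {R z - z, RU (R z) - z} := by
      rw [Submodule.span_le]
      rintro v ⟨p, hp, u, hu, rfl⟩
      have key : ∀ w ∈ ({z, R z, RU (R z)} : Set (EuclideanSpace ℝ (Fin n))),
          w - z ∈ Submodule.span ℝ {R z - z, RU (R z) - z} := by
        rintro w (rfl | rfl | rfl)
        · simpa using Submodule.zero_mem _
        · exact Submodule.subset_span (by simp)
        · exact Submodule.subset_span (by simp)
      show p -ᵥ u ∈ Submodule.span ℝ {R z - z, RU (R z) - z}
      have hpu : p -ᵥ u = (p - z) - (u - z) := by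
        rw [vsub_eq_sub]; module
      rw [hpu]
      exact Submodule.sub_mem _ (key p hp) (key u hu)
    exact hle hdir
  obtain ⟨a, b, hab⟩ := Submodule.mem_span_pair.1 hcz
  have hRz' : R z - z = hv + ev := by rw [hvdef, hevdef]; module
  have hRU' : RU (R z) - z = hv - ev := by
    rw [hRU (R z), ← hqdef, hvdef, hevdef]; module
  rw [hRz', hRU'] at hab
  -- orthogonality scalars (independent of the fixed point)
  have hhe : ⟪hv, ev⟫ = 0 := by
    have h := horth (R z) q hqU z hz
    rw [← hqdef] at h
    rw [hvdef, hevdef, real_inner_comm]; exact h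
  have hA : (0:ℝ) ≤ ⟪hv, hv⟫ := real_inner_self_nonneg
  have hB : (0:ℝ) ≤ ⟪ev, ev⟫ := real_inner_self_nonneg
  -- main inequality, for an arbitrary common fixed point
  have keyineq : ∀ y' : EuclideanSpace ℝ (Fin n), T y' = y' → y' ∈ U →
      ‖c - y'‖ ≤ ‖PU (T z) - y'‖ := by
    intro y' hTy' hy'U
    obtain ⟨d, hddef⟩ : ∃ w, w = z - y' := ⟨_, rfl⟩
    have hde : ⟪d, ev⟫ = 0 := by
      have h := horth (R z) z hz y' hy'U
      rw [← hqdef] at h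
      rw [hddef, hevdef, real_inner_comm]; exact h
    have hC : (0:ℝ) ≤ ⟪d, d⟫ := real_inner_self_nonneg
    have hCS : ⟪d, hv⟫^2 ≤ ⟪d, d⟫ * ⟪hv, hv⟫ := by
      nlinarith [real_inner_mul_inner_self_le d hv]
    -- vector decompositions
    have hc1 : c - z = (0:ℝ) • d + (a+b) • hv + (a-b) • ev := by
      linear_combination (norm := module) -hab
    have hc2 : c - R z = (0:ℝ) • d + (a+b-1) • hv + (a-b-1) • ev := by
      linear_combination (norm := module) -hab - hRz'
    have hc3 : c - RU (R z) = (0:ℝ) • d + (a+b-1) • hv + (a-b+1) • ev := by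
      linear_combination (norm := module) -hab - hRU'
    have hc4 : c - y' = (1:ℝ) • d + (a+b) • hv + (a-b) • ev := by
      rw [hddef]
      linear_combination (norm := module) -hab
    have hc5 : PU (T z) - y' = (1:ℝ) • d + (2⁻¹:ℝ) • hv + (0:ℝ) • ev := by
      rw [hsm, hmdef, hddef, hvdef]; module
    have hc6 : T z - y' = (1:ℝ) • d + (2⁻¹:ℝ) • hv + (2⁻¹:ℝ) • ev := by
      rw [hTz, hddef]; module
    have hc7 : z - y' = (1:ℝ) • d + (0:ℝ) • hv + (0:ℝ) • ev := by
      rw [hddef]; module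
    have hc8 : (T z - y') - (z - y') = (0:ℝ) • d + (2⁻¹:ℝ) • hv + (2⁻¹:ℝ) • ev := by
      rw [hTz]; module
    -- firm nonexpansiveness in scalars
    have hfne := hT z y'
    rw [hTy'] at hfne
    rw [hc8, hc6, hc7, norm_comb d hv ev hde hhe, norm_comb d hv ev hde hhe,
      norm_comb d hv ev hde hhe] at hfne
    have hD : 2*⟪d, hv⟫ + ⟪hv, hv⟫ + ⟪ev, ev⟫ ≤ 0 := by nlinarith [hfne]
    -- circumcenter equations in scalars
    have h1sq : ‖c - z‖^2 = ‖c - R z‖^2 := by rw [h1]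
    have h2sq : ‖c - z‖^2 = ‖c - RU (R z)‖^2 := by rw [h2]
    rw [hc1, hc2, norm_comb d hv ev hde hhe, norm_comb d hv ev hde hhe] at h1sq
    rw [hc1, hc3, norm_comb d hv ev hde hhe, norm_comb d hv ev hde hhe] at h2sq
    -- final squared inequality
    have hgoal : ‖c - y'‖^2 ≤ ‖PU (T z) - y'‖^2 := by
      rw [hc4, hc5, norm_comb d hv ev hde hhe, norm_comb d hv ev hde hhe]
      have hs := scalar_key ⟪hv, hv⟫ ⟪ev, ev⟫ ⟪d, d⟫ ⟪d, hv⟫ (a+b) (a-b)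
        hA hB hC (by linear_combination h1sq) (by linear_combination h2sq) hD hCS
      nlinarith [hs]
    nlinarith [hgoal, norm_nonneg (c - y'), norm_nonneg (PU (T z) - y')]
  refine ⟨keyineq y hy.1 hy.2, ?_⟩
  haveI : Nonempty ({w : EuclideanSpace ℝ (Fin n) | T w = w ∧ w ∈ U}) := ⟨⟨y, hy⟩⟩
  have hstep : ∀ w ∈ {w : EuclideanSpace ℝ (Fin n) | T w = w ∧ w ∈ U},
      Metric.infDist c {w : EuclideanSpace ℝ (Fin n) | T w = w ∧ w ∈ U} ≤ dist (PU (T z)) w := by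
    intro w hw
    refine (Metric.infDist_le_dist_of_mem hw).trans ?_
    rw [dist_eq_norm, dist_eq_norm]
    exact keyineq w hw.1 hw.2
  conv_rhs => rw [Metric.infDist_eq_iInf]
  exact le_ciInf fun w => hstep w w.2
end

section
/- Assume Fix(T, P_U) ≠ ∅. Let {x^k} ⊆ ℝⁿ be a sequence with x⁰ ∈ U such that for every k, x^{k+1} is a circumcenter for x^k, i.e. x^{k+1} belongs to the affine span of {x^k, R(x^k), R_U(R(x^k))} and ‖x^{k+1} − x^k‖ = ‖x^{k+1} − R(x^k)‖ = ‖x^{k+1} − R_U(R(x^k))‖. Then x^k ∈ U for all k and {x^k} converges to a point of Fix(T, P_U). -/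
/-!
Write `r = R x`, `p = P_U r` and `m = T x`, the midpoint of `x` and `r`. For `x ∈ U` the vector
`r - p` is orthogonal to `U`, so `r` and `R_U r = 2p - r` are mirror images in `U`, and a
circumcenter `z`, being equidistant from them, lies on the line through `x` and `p`; in particular
`z ∈ U`. Being equidistant from `x` and `r`, `z` also lies on the hyperplane through `m` orthogonal
to `x - m`, and firm nonexpansiveness puts every fixed point of `T` on the far side of it. These
give the Fejér inequality `‖z - y‖² + ‖z - x‖² ≤ ‖x - y‖²` for all `y ∈ Fix(T, P_U)`, and also
`‖T x - x‖ ≤ ‖z - x‖`. So the steps, and with them the residuals `T x^k - x^k`, tend to zero, a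
cluster point of the bounded sequence is a common fixed point, and Fejér monotonicity turns
convergence of a subsequence into convergence of the whole sequence.
-/

open Filter Topology
open scoped RealInnerProductSpace

section InnerProductSpace

variable {F : Type*} [NormedAddCommGroup F] [InnerProductSpace ℝ F]

theorem exists_affineSubspace_coe_eq {U : Set F}
    (hU : ∀ x ∈ U, ∀ y ∈ U, ∀ t : ℝ, t • x + (1 - t) • y ∈ U) :
    ∃ V : AffineSubspace ℝ F, (V : Set F) = U := by
  refine ⟨{ carrier := U, smul_vsub_vadd_mem' := fun c p₁ p₂ p₃ h₁ h₂ h₃ => ?_ }, rfl⟩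
  -- `p₁ - p₂ + p₃` is the reflection of `p₂` in the midpoint of `p₁` and `p₃`
  have hmid := hU p₁ h₁ p₃ h₃ (1 / 2)
  have hrefl := hU _ hmid p₂ h₂ 2
  convert hU _ hrefl p₃ h₃ c using 1
  simp only [vsub_eq_sub, vadd_eq_add]
  module

theorem AffineSubspace.inner_sub_eq_zero_of_forall_norm_sub_le {V : AffineSubspace ℝ F}
    {w p : F} (hp : p ∈ V) (hmin : ∀ u ∈ V, ‖w - p‖ ≤ ‖w - u‖) {u : F} (hu : u ∈ V) :
    ⟪w - p, u - p⟫ = 0 := by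
  have : Nonempty (V : Set F) := ⟨⟨p, hp⟩⟩
  have hinf : ‖w - p‖ = ⨅ v : (V : Set F), ‖w - v‖ :=
    le_antisymm (le_ciInf fun v => hmin v v.2)
      (ciInf_le ⟨0, by rintro _ ⟨v, rfl⟩; positivity⟩ (⟨p, hp⟩ : (V : Set F)))
  -- the variational inequality of the convex set `V`, at `u` and at its mirror image `2p - u`
  have hle := (norm_eq_iInf_iff_real_inner_le_zero V.convex hp).mp hinf
  have hrefl : p - u + p ∈ V := V.vadd_mem_of_mem_direction (V.vsub_mem_direction hp hu) hp
  have h₁ := hle u hu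
  have h₂ := hle _ hrefl
  rw [show p - u + p - p = -(u - p) by abel, inner_neg_right] at h₂
  linarith

theorem mem_affineSpan_pair_of_mem_affineSpan_of_norm_sub_eq {x p r z : F}
    (horth : ⟪r - p, x - p⟫ = 0) (hz : z ∈ affineSpan ℝ {x, r, (2 : ℝ) • p - r})
    (hdist : ‖z - r‖ = ‖z - ((2 : ℝ) • p - r)‖) : z ∈ line[ℝ, x, p] := by
  obtain ⟨b, c, hbc⟩ : ∃ b c : ℝ, b • (r - x) + c • ((2 : ℝ) • p - r - x) = z - x := by
    rw [← AffineSubspace.vsub_right_mem_direction_iff_mem (mem_affineSpan ℝ (Set.mem_insert x _)),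
      direction_affineSpan, vectorSpan_eq_span_vsub_set_right ℝ (Set.mem_insert x _)] at hz
    simpa [Set.image_insert_eq, Submodule.mem_span_pair] using hz
  have hperp : ⟪z - p, r - p⟫ = 0 := by
    have h := congrArg (· ^ 2) hdist
    rw [show z - r = (z - p) - (r - p) by abel,
      show z - ((2 : ℝ) • p - r) = (z - p) + (r - p) by module, norm_sub_sq_real,
      norm_add_sq_real] at h
    linarith
  have hnormal : (b - c) • (r - p) = 0 := by
    have : ⟪z - p, r - p⟫ = (b - c) * ‖r - p‖ ^ 2 := by
      rw [show z - p = (1 - b - c) • (x - p) + (b - c) • (r - p) by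
        rw [← sub_add_sub_cancel z x p, ← hbc]; module]
      rw [inner_add_left, real_inner_smul_left, real_inner_smul_left, real_inner_self_eq_norm_sq,
        real_inner_comm, horth]
      ring
    rw [hperp, eq_comm, mul_eq_zero, sq_eq_zero_iff, norm_eq_zero] at this
    rcases this with h | h <;> simp [h]
  rw [← vsub_vadd z x, vadd_left_mem_affineSpan_pair]
  refine ⟨b + c, ?_⟩
  simp only [vsub_eq_sub]
  rw [← hbc]
  linear_combination (norm := module) -hnormal

theorem norm_sub_sq_add_norm_sub_sq_le_of_mem_affineSpan_pair {V : AffineSubspace ℝ F}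
    {x m p y z : F} (hx : x ∈ V) (hy : y ∈ V)
    (horth : ∀ u ∈ V, ⟪(2 : ℝ) • m - x - p, u - p⟫ = 0) (hz : z ∈ line[ℝ, x, p])
    (hdist : ‖z - x‖ = ‖z - ((2 : ℝ) • m - x)‖) (hym : 0 ≤ ⟪m - x, y - m⟫) :
    ‖z - y‖ ^ 2 + ‖z - x‖ ^ 2 ≤ ‖x - y‖ ^ 2 := by
  rw [← vsub_vadd z x, vadd_left_mem_affineSpan_pair] at hz
  obtain ⟨σ, hσ⟩ := hz
  simp only [vsub_eq_sub] at hσ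
  rcases eq_or_ne (p - x) 0 with he | he
  · obtain rfl : z = x := by rw [← sub_eq_zero, ← hσ, he, smul_zero]
    simp
  -- coordinates `e = p - x` and `g = y - x` along `V`, and `f = 2m - x - p` orthogonal to it
  have hxo := horth x hx
  have hyo := horth y hy
  have hdist2 := congrArg (· ^ 2) hdist
  rw [show x - p = -(p - x) by abel] at hxo
  rw [show y - p = (y - x) - (p - x) by abel] at hyo
  rw [show z - ((2 : ℝ) • m - x) = (σ - 1) • (p - x) - ((2 : ℝ) • m - x - p) by
    linear_combination (norm := module) -hσ, ← hσ] at hdist2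
  rw [show m - x = (1 / 2 : ℝ) • ((p - x) + ((2 : ℝ) • m - x - p)) by module,
    show y - m = (y - x) - (1 / 2 : ℝ) • ((p - x) + ((2 : ℝ) • m - x - p)) by module] at hym
  rw [show z - y = σ • (p - x) - (y - x) by linear_combination (norm := module) -hσ, ← hσ,
    show x - y = -(y - x) by abel]
  generalize p - x = e at *
  generalize (2 : ℝ) • m - x - p = f at *
  generalize y - x = g at *
  simp only [← real_inner_self_eq_norm_sq, inner_add_left, inner_add_right, inner_sub_left,
    inner_sub_right, inner_neg_left, inner_neg_right, real_inner_smul_left,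
    real_inner_smul_right] at hdist2 hym hxo hyo ⊢
  have hE : 0 < ⟪e, e⟫ := real_inner_self_pos.mpr he
  have hF : 0 ≤ ⟪f, f⟫ := real_inner_self_nonneg
  rw [real_inner_comm e f, real_inner_comm g f, real_inner_comm g e] at *
  have hσ0 : 0 ≤ σ := by nlinarith
  have heg : σ * ⟪e, e⟫ ≤ ⟪g, e⟫ := by nlinarith
  nlinarith [mul_le_mul_of_nonneg_left heg hσ0]

theorem norm_sub_le_of_norm_sub_eq_norm_sub_reflection {x m z : F}
    (hdist : ‖z - x‖ = ‖z - ((2 : ℝ) • m - x)‖) : ‖m - x‖ ≤ ‖z - x‖ := by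
  have h := congrArg (· ^ 2) hdist
  rw [show z - ((2 : ℝ) • m - x) = (z - x) - (2 : ℝ) • (m - x) by module, norm_sub_sq_real (z - x),
    real_inner_smul_right, norm_smul, Real.norm_two] at h
  have hinner : ⟪z - x, m - x⟫ = ‖m - x‖ ^ 2 := by linarith
  rcases (norm_nonneg (m - x)).eq_or_lt with h0 | h0
  · rw [← h0]; exact norm_nonneg _
  · nlinarith [real_inner_le_norm (z - x) (m - x)]

end InnerProductSpace

theorem tendsto_atTop_zero_of_add_le {a d : ℕ → ℝ} (ha : ∀ k, 0 ≤ a k) (hd : ∀ k, 0 ≤ d k)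
    (h : ∀ k, a (k + 1) + d k ≤ a k) : Tendsto d atTop (𝓝 0) := by
  have hanti : Antitone a := antitone_nat_of_succ_le fun k => by linarith [h k, hd k]
  have hlim := tendsto_atTop_ciInf hanti ⟨0, by rintro _ ⟨k, rfl⟩; exact ha k⟩
  have hdiff : Tendsto (fun k => a k - a (k + 1)) atTop (𝓝 0) := by
    simpa using hlim.sub (hlim.comp (tendsto_add_atTop_nat 1))
  exact squeeze_zero hd (fun k => by linarith [h k]) hdiff

theorem tendsto_of_antitone_dist_of_tendsto_comp {X : Type*} [PseudoMetricSpace X]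
    {x : ℕ → X} {a : X} (hanti : Antitone fun k => dist (x k) a) {φ : ℕ → ℕ}
    (hφ : StrictMono φ) (hsub : Tendsto (x ∘ φ) atTop (𝓝 a)) : Tendsto x atTop (𝓝 a) := by
  have hlim := tendsto_atTop_ciInf hanti ⟨0, by rintro _ ⟨k, rfl⟩; exact dist_nonneg⟩
  have hzero : ⨅ k, dist (x k) a = 0 :=
    tendsto_nhds_unique (hlim.comp hφ.tendsto_atTop) (tendsto_iff_dist_tendsto_zero.mp hsub)
  exact tendsto_iff_dist_tendsto_zero.mpr (hzero ▸ hlim)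

theorem exists_tendsto_of_fejer {X : Type*} [PseudoMetricSpace X] [ProperSpace X]
    {S : Set X} {x : ℕ → X} (hS : S.Nonempty)
    (hfejer : ∀ y ∈ S, ∀ k, dist (x (k + 1)) y ≤ dist (x k) y)
    (hcluster : ∀ a (φ : ℕ → ℕ), StrictMono φ → Tendsto (x ∘ φ) atTop (𝓝 a) → a ∈ S) :
    ∃ a ∈ S, Tendsto x atTop (𝓝 a) := by
  have hanti : ∀ y ∈ S, Antitone fun k => dist (x k) y :=
    fun y hy => antitone_nat_of_succ_le (hfejer y hy)
  obtain ⟨y, hy⟩ := hS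
  obtain ⟨a, -, φ, hφ, hsub⟩ := tendsto_subseq_of_bounded (Metric.isBounded_closedBall
    (x := y) (r := dist (x 0) y)) fun k => hanti y hy (Nat.zero_le k)
  have ha := hcluster a φ hφ hsub
  exact ⟨a, ha, tendsto_of_antitone_dist_of_tendsto_comp (hanti a ha) hφ hsub⟩

theorem Continuous.isFixedPt_of_tendsto_apply_sub {E ι : Type*} [TopologicalSpace E] [AddGroup E]
    [IsTopologicalAddGroup E] [T2Space E] {T : E → E} (hT : Continuous T) {l : Filter ι}
    [l.NeBot] {x : ι → E} {a : E} (hres : Tendsto (fun i => T (x i) - x i) l (𝓝 0))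
    (hx : Tendsto x l (𝓝 a)) : Function.IsFixedPt T a :=
  sub_eq_zero.mp (tendsto_nhds_unique (((hT.tendsto a).comp hx).sub hx) hres)

theorem exists_tendsto_fixedPoint_of_fejer {E : Type*} [NormedAddCommGroup E] [ProperSpace E]
    {T : E → E} (hT : Continuous T) {C : Set E} (hC : IsClosed C) {x : ℕ → E}
    (hxC : ∀ k, x k ∈ C) (hfix : ∃ y, T y = y ∧ y ∈ C)
    (hfejer : ∀ y, T y = y → y ∈ C → ∀ k,
      ‖x (k + 1) - y‖ ^ 2 + ‖x (k + 1) - x k‖ ^ 2 ≤ ‖x k - y‖ ^ 2)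
    (hres : ∀ k, ‖T (x k) - x k‖ ≤ ‖x (k + 1) - x k‖) :
    ∃ a, (T a = a ∧ a ∈ C) ∧ Tendsto x atTop (𝓝 a) := by
  have hstep : Tendsto (fun k => ‖x (k + 1) - x k‖) atTop (𝓝 0) := by
    obtain ⟨y, hy, hyC⟩ := hfix
    simpa using (tendsto_atTop_zero_of_add_le (a := fun k => ‖x k - y‖ ^ 2)
      (fun _ => by positivity) (fun _ => by positivity) (hfejer y hy hyC)).sqrt
  have hresidual : Tendsto (fun k => T (x k) - x k) atTop (𝓝 0) :=
    tendsto_zero_iff_norm_tendsto_zero.mpr (squeeze_zero (fun _ => norm_nonneg _) hres hstep)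
  refine exists_tendsto_of_fejer (S := {y | T y = y ∧ y ∈ C}) hfix (fun y ⟨hy, hyC⟩ k => ?_)
    fun a φ hφ ha => ⟨?_, ?_⟩
  · rw [dist_eq_norm, dist_eq_norm,
      ← pow_le_pow_iff_left₀ (norm_nonneg _) (norm_nonneg _) two_ne_zero]
    linarith [hfejer y hy hyC k, sq_nonneg ‖x (k + 1) - x k‖]
  · exact hT.isFixedPt_of_tendsto_apply_sub (hresidual.comp hφ.tendsto_atTop) ha
  · exact hC.mem_of_tendsto ha (.of_forall fun j => hxC (φ j))

namespace FirmlyNonexpansive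

variable {n : ℕ} {T : EuclideanSpace ℝ (Fin n) → EuclideanSpace ℝ (Fin n)}

theorem lipschitzWith_one (hT : FirmlyNonexpansive T) : LipschitzWith 1 T :=
  LipschitzWith.of_dist_le_mul fun a b => by
    rw [NNReal.coe_one, one_mul, dist_eq_norm, dist_eq_norm]
    have h := hT a b
    exact (pow_le_pow_iff_left₀ (norm_nonneg _) (norm_nonneg _) two_ne_zero).mp
      (by nlinarith [sq_nonneg ‖(T a - T b) - (a - b)‖])

theorem inner_sub_nonneg_of_apply_eq (hT : FirmlyNonexpansive T)
    {y : EuclideanSpace ℝ (Fin n)} (hy : T y = y) (x : EuclideanSpace ℝ (Fin n)) :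
    0 ≤ ⟪T x - x, y - T x⟫ := by
  have h := hT x y
  rw [hy, show x - y = (T x - y) - (T x - x) by abel, sub_sub_cancel,
    norm_sub_sq_real (T x - y)] at h
  rw [← neg_sub (T x) y, inner_neg_right, real_inner_comm]
  linarith

end FirmlyNonexpansive

theorem crm_converges_general {n : ℕ}
    (T : EuclideanSpace ℝ (Fin n) → EuclideanSpace ℝ (Fin n))
    (hT : FirmlyNonexpansive T)
    (U : Set (EuclideanSpace ℝ (Fin n)))
    (hUaff : ∀ x ∈ U, ∀ y ∈ U, ∀ t : ℝ, t • x + (1 - t) • y ∈ U)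
    (PU : EuclideanSpace ℝ (Fin n) → EuclideanSpace ℝ (Fin n))
    (hPU : IsProjOn U PU)
    (R RU : EuclideanSpace ℝ (Fin n) → EuclideanSpace ℝ (Fin n))
    (hR : ∀ w, R w = (2 : ℝ) • T w - w) (hRU : ∀ w, RU w = (2 : ℝ) • PU w - w)
    (hfix : ∃ y, T y = y ∧ y ∈ U)
    (x : ℕ → EuclideanSpace ℝ (Fin n)) (hx0 : x 0 ∈ U)
    (hcirc : ∀ k, x (k + 1) ∈
        affineSpan ℝ ({x k, R (x k), RU (R (x k))} : Set (EuclideanSpace ℝ (Fin n))) ∧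
      ‖x (k + 1) - x k‖ = ‖x (k + 1) - R (x k)‖ ∧
      ‖x (k + 1) - x k‖ = ‖x (k + 1) - RU (R (x k))‖) :
    (∀ k, x k ∈ U) ∧
      ∃ xbar, (T xbar = xbar ∧ xbar ∈ U) ∧
        Filter.Tendsto x Filter.atTop (nhds xbar) := by
  obtain ⟨V, rfl⟩ := exists_affineSubspace_coe_eq hUaff
  have horth : ∀ w, ∀ u ∈ V, ⟪w - PU w, u - PU w⟫ = 0 := fun w _ hu =>
    V.inner_sub_eq_zero_of_forall_norm_sub_le (hPU w).1 (hPU w).2 hu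
  have hline : ∀ k, x k ∈ V → x (k + 1) ∈ line[ℝ, x k, PU (R (x k))] := fun k hk => by
    obtain ⟨hspan, hdist₁, hdist₂⟩ := hcirc k
    rw [hRU] at hspan hdist₂
    exact mem_affineSpan_pair_of_mem_affineSpan_of_norm_sub_eq (horth _ _ hk) hspan
      (hdist₁.symm.trans hdist₂)
  have hmem : ∀ k, x k ∈ V := fun k => by
    induction k with
    | zero => exact hx0
    | succ k ih => exact affineSpan_pair_le_of_mem_of_mem ih (hPU _).1 (hline k ih)
  have hdist : ∀ k, ‖x (k + 1) - x k‖ = ‖x (k + 1) - ((2 : ℝ) • T (x k) - x k)‖ := fun k =>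
    hR (x k) ▸ (hcirc k).2.1
  refine ⟨hmem, exists_tendsto_fixedPoint_of_fejer hT.lipschitzWith_one.continuous
    V.closed_of_finiteDimensional hmem hfix (fun y hy hyV k => ?_)
    fun k => norm_sub_le_of_norm_sub_eq_norm_sub_reflection (hdist k)⟩
  exact norm_sub_sq_add_norm_sub_sq_le_of_mem_affineSpan_pair (hmem k) hyV
    (fun u hu => hR (x k) ▸ horth (R (x k)) u hu) (hline k (hmem k)) (hdist k)
    (hT.inner_sub_nonneg_of_apply_eq hy _)

/-- Global convergence of the circumcentered-reflection method: if `Fix(T, P_U) ≠ ∅`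
and `x⁰ ∈ U`, and each `x^{k+1}` is a circumcenter of `x^k`, `R(x^k)`, `R_U(R(x^k))`,
then the whole sequence stays in `U` and converges to a common fixed point of `T`
and `P_U`. -/
theorem crm_converges {n : ℕ}
    (T : EuclideanSpace ℝ (Fin n) → EuclideanSpace ℝ (Fin n))
    (hT : FirmlyNonexpansive T)
    (U : Set (EuclideanSpace ℝ (Fin n))) (hUne : U.Nonempty)
    (hUaff : ∀ x ∈ U, ∀ y ∈ U, ∀ t : ℝ, t • x + (1 - t) • y ∈ U)
    (PU : EuclideanSpace ℝ (Fin n) → EuclideanSpace ℝ (Fin n))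
    (hPU : IsProjOn U PU)
    (R RU : EuclideanSpace ℝ (Fin n) → EuclideanSpace ℝ (Fin n))
    (hR : ∀ w, R w = (2 : ℝ) • T w - w) (hRU : ∀ w, RU w = (2 : ℝ) • PU w - w)
    (hfix : ∃ y, T y = y ∧ y ∈ U)
    (x : ℕ → EuclideanSpace ℝ (Fin n)) (hx0 : x 0 ∈ U)
    (hcirc : ∀ k, x (k + 1) ∈
        affineSpan ℝ ({x k, R (x k), RU (R (x k))} : Set (EuclideanSpace ℝ (Fin n))) ∧
      ‖x (k + 1) - x k‖ = ‖x (k + 1) - R (x k)‖ ∧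
      ‖x (k + 1) - x k‖ = ‖x (k + 1) - RU (R (x k))‖) :
    (∀ k, x k ∈ U) ∧
      ∃ xbar, (T xbar = xbar ∧ xbar ∈ U) ∧
        Filter.Tendsto x Filter.atTop (nhds xbar) :=
  crm_converges_general T hT U hUaff PU hPU R RU hR hRU hfix x hx0 hcirc
end

section
/- Assume Fix(T, P_U) ≠ ∅ and that the error bound EB holds with constant ω ∈ (0, 1]. Then for every x ∈ U and every circumcenter c for x (i.e. c in the affine span of {x, R(x), R_U(R(x))} with ‖c − x‖ = ‖c − R(x)‖ = ‖c − R_U(R(x))‖): dist(c, Fix(T, P_U))² ≤ dist(S(x), Fix(T, P_U))² ≤ (1 − ω²) · dist(x, Fix(T, P_U))². -/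
/-!
Put `m = P_U (R x)`, `a = x - m` and `e = R x - m`; as `x ∈ U`, `a` is parallel and `e`
orthogonal to `U`. Then `x = m + a`, `R x = m + e`, `R_U (R x) = m - e`, `T x = m + (a + e) / 2`
and `S x = m + a / 2`, and equidistance forces every circumcenter in the plane of these points
onto the line `m + ℝ a`: `c = m + τ a` with `(1 - 2τ) ‖a‖² = ‖e‖²`, so `τ ≤ 1 / 2` when `a ≠ 0`.
Firm nonexpansiveness at a common fixed point `z` reads `⟪a, z - m⟫ ≤ τ ‖a‖²`, so
`⟪S x - c, z - c⟫ ≤ 0` and `‖c - z‖ ≤ ‖S x - z‖`. For MAP,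
`‖S x - z‖² ≤ ‖T x - z‖² ≤ ‖x - z‖² - ‖x - T x‖²`, and the error bound turns `‖x - T x‖²` into
`ω² dist(x, Fix)²`.
-/

open RealInnerProductSpace Metric

section MetricSpace

variable {α : Type*} [PseudoMetricSpace α] {s : Set α} {x y : α}

theorem infDist_le_infDist_of_forall_dist_le (h : ∀ z ∈ s, dist x z ≤ dist y z) :
    infDist x s ≤ infDist y s := by
  rcases s.eq_empty_or_nonempty with rfl | hs
  · simp
  · exact (le_infDist hs).2 fun z hz => (infDist_le_dist_of_mem hz).trans (h z hz)

theorem infDist_sq_add_sq_le (hs : s.Nonempty) {r : ℝ}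
    (h : ∀ z ∈ s, dist y z ^ 2 + r ^ 2 ≤ dist x z ^ 2) :
    infDist y s ^ 2 + r ^ 2 ≤ infDist x s ^ 2 := by
  refine (Real.sqrt_le_left infDist_nonneg).1 <| (le_infDist hs).2 fun z hz => ?_
  refine Real.sqrt_le_iff.2 ⟨dist_nonneg, (h z hz).trans' ?_⟩
  gcongr
  · exact infDist_nonneg
  · exact infDist_le_dist_of_mem hz

end MetricSpace

section InnerProductSpace

variable {E : Type*} [NormedAddCommGroup E] [InnerProductSpace ℝ E]

theorem norm_sub_le_norm_sub_of_inner_nonpos {c p z : E} (h : ⟪p - c, z - c⟫ ≤ 0) :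
    ‖c - z‖ ≤ ‖p - z‖ := by
  have hsq : ‖p - z‖ ^ 2 = ‖p - c‖ ^ 2 - 2 * ⟪p - c, z - c⟫ + ‖z - c‖ ^ 2 := by
    rw [← norm_sub_sq_real]; congr 2; abel
  rw [norm_sub_rev c z]
  exact pow_le_pow_iff_left₀ (norm_nonneg _) (norm_nonneg _) two_ne_zero |>.1
    (by nlinarith [sq_nonneg ‖p - c‖])

theorem norm_smul_add_smul_sq_of_inner_eq_zero {a e : E} (hae : ⟪a, e⟫ = 0) (τ σ : ℝ) :
    ‖τ • a + σ • e‖ ^ 2 = τ ^ 2 * ‖a‖ ^ 2 + σ ^ 2 * ‖e‖ ^ 2 := by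
  rw [norm_add_sq_real, real_inner_smul_left, real_inner_smul_right, hae, norm_smul, norm_smul,
    mul_pow, mul_pow, Real.norm_eq_abs, Real.norm_eq_abs, sq_abs, sq_abs]
  ring

theorem exists_eq_add_smul_of_mem_affineSpan_of_equidistant {m a e c : E} (hae : ⟪a, e⟫ = 0)
    (hc : c ∈ affineSpan ℝ {m + a, m + e, m - e})
    (h₁ : ‖c - (m + a)‖ = ‖c - (m + e)‖) (h₂ : ‖c - (m + a)‖ = ‖c - (m - e)‖) :
    ∃ τ : ℝ, c = m + τ • a ∧ (1 - 2 * τ) * ‖a‖ ^ 2 = ‖e‖ ^ 2 := by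
  have hspan : affineSpan ℝ {m + a, m + e, m - e} ≤
      AffineSubspace.mk' m (Submodule.span ℝ {a, e}) := by
    refine affineSpan_le.2 ?_
    simp only [Set.insert_subset_iff, Set.singleton_subset_iff, SetLike.mem_coe,
      AffineSubspace.mem_mk', vsub_eq_sub, add_sub_cancel_left, sub_sub_cancel_left]
    exact ⟨Submodule.subset_span (by simp), Submodule.subset_span (by simp),
      neg_mem (Submodule.subset_span (by simp))⟩
  obtain ⟨τ, σ, hcm⟩ := Submodule.mem_span_pair.1 (AffineSubspace.mem_mk'.1 (hspan hc))
  rw [vsub_eq_sub] at hcm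
  have hsq : ∀ p : E, ‖c - (m + p)‖ ^ 2 = ‖τ • a + σ • e - p‖ ^ 2 := fun p => by
    rw [hcm]; congr 2; abel
  have hd₁ : ‖c - (m + a)‖ ^ 2 = (τ - 1) ^ 2 * ‖a‖ ^ 2 + σ ^ 2 * ‖e‖ ^ 2 := by
    rw [hsq, ← norm_smul_add_smul_sq_of_inner_eq_zero hae]; congr 2; module
  have hd₂ : ‖c - (m + e)‖ ^ 2 = τ ^ 2 * ‖a‖ ^ 2 + (σ - 1) ^ 2 * ‖e‖ ^ 2 := by
    rw [hsq, ← norm_smul_add_smul_sq_of_inner_eq_zero hae]; congr 2; module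
  have hd₃ : ‖c - (m - e)‖ ^ 2 = τ ^ 2 * ‖a‖ ^ 2 + (σ + 1) ^ 2 * ‖e‖ ^ 2 := by
    rw [sub_eq_add_neg m e, hsq, ← norm_smul_add_smul_sq_of_inner_eq_zero hae]; congr 2; module
  rw [← h₁] at hd₂
  rw [← h₂] at hd₃
  have hσ : σ * ‖e‖ ^ 2 = 0 := by linear_combination (hd₂ - hd₃) / 4
  have hσe : σ • e = 0 := by
    rcases mul_eq_zero.1 hσ with h | h
    · rw [h, zero_smul]
    · rw [norm_eq_zero.1 (pow_eq_zero_iff two_ne_zero |>.1 h), smul_zero]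
  refine ⟨τ, ?_, by linear_combination hd₂ - hd₁ - 2 * hσ⟩
  rw [← add_sub_cancel m c, ← hcm, hσe, add_zero]

theorem norm_sub_sq_eq_of_inner_eq_zero {w p u : E} (h : ⟪w - p, u - p⟫ = 0) :
    ‖w - u‖ ^ 2 = ‖w - p‖ ^ 2 + ‖u - p‖ ^ 2 := by
  rw [← sub_sub_sub_cancel_right w u p, norm_sub_sq_real, h]
  ring

/-- In the coordinates `a = x - m`, `e = R x - m`, `w = z - m` around `m = P_U (R x)`, `hw` is firm
nonexpansiveness at the fixed point `z` and the conclusion is `⟪S x - c, z - c⟫ ≤ 0`. -/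
theorem inner_smul_sub_smul_nonpos {a e w : E} {τ : ℝ} (hae : ⟪a, e⟫ = 0) (hew : ⟪e, w⟫ = 0)
    (hτ : (1 - 2 * τ) * ‖a‖ ^ 2 = ‖e‖ ^ 2)
    (hw : ⟪(1 / 2 : ℝ) • (a - e), w - (1 / 2 : ℝ) • (a + e)⟫ ≤ 0) :
    ⟪(1 / 2 - τ) • a, w - τ • a⟫ ≤ 0 := by
  rcases eq_or_ne a 0 with rfl | ha
  · simp
  have hA : 0 < ‖a‖ ^ 2 := by positivity
  simp only [inner_sub_left, inner_sub_right, inner_add_right, real_inner_smul_left,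
    real_inner_smul_right, real_inner_self_eq_norm_sq, hae, hew, real_inner_comm a e] at hw ⊢
  have hτ' : τ ≤ 1 / 2 := by nlinarith [sq_nonneg ‖e‖]
  nlinarith

end InnerProductSpace

section Euclidean

variable {n : ℕ}

theorem FirmlyNonexpansive.norm_sub_sq_add_norm_sub_sq_le
    {T : EuclideanSpace ℝ (Fin n) → EuclideanSpace ℝ (Fin n)} (hT : FirmlyNonexpansive T)
    (x : EuclideanSpace ℝ (Fin n)) {z : EuclideanSpace ℝ (Fin n)} (hz : T z = z) :
    ‖T x - z‖ ^ 2 + ‖x - T x‖ ^ 2 ≤ ‖x - z‖ ^ 2 := by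
  have h := hT x z
  rw [hz, show T x - z - (x - z) = -(x - T x) by abel, norm_neg] at h
  linarith

theorem FirmlyNonexpansive.inner_sub_nonpos
    {T : EuclideanSpace ℝ (Fin n) → EuclideanSpace ℝ (Fin n)} (hT : FirmlyNonexpansive T)
    (x : EuclideanSpace ℝ (Fin n)) {z : EuclideanSpace ℝ (Fin n)} (hz : T z = z) :
    ⟪x - T x, z - T x⟫ ≤ 0 := by
  have h := hT.norm_sub_sq_add_norm_sub_sq_le x hz
  rw [norm_sub_rev (T x), ← sub_sub_sub_cancel_right x z (T x), norm_sub_sq_real (x - T x)] at h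
  linarith

variable {U : Set (EuclideanSpace ℝ (Fin n))}
  {P : EuclideanSpace ℝ (Fin n) → EuclideanSpace ℝ (Fin n)}

theorem IsProjOn.inner_eq_zero (hP : IsProjOn U P)
    (hU : ∀ x ∈ U, ∀ y ∈ U, ∀ t : ℝ, t • x + (1 - t) • y ∈ U)
    (w : EuclideanSpace ℝ (Fin n)) {u : EuclideanSpace ℝ (Fin n)} (hu : u ∈ U) :
    ⟪w - P w, u - P w⟫ = 0 := by
  have hconv : Convex ℝ U := fun x hx y hy a b _ _ hab => by
    obtain rfl : b = 1 - a := by linarith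
    exact hU x hx y hy a
  have hmin : ‖w - P w‖ = ⨅ v : U, ‖w - v‖ := by
    have : Nonempty U := ⟨⟨u, hu⟩⟩
    refine le_antisymm (le_ciInf fun v => (hP w).2 v v.2) ?_
    exact ciInf_le (f := fun v : U => ‖w - v‖) ⟨0, by rintro _ ⟨v, rfl⟩; exact norm_nonneg _⟩
      ⟨P w, (hP w).1⟩
  have hvi := (norm_eq_iInf_iff_real_inner_le_zero hconv (hP w).1).1 hmin
  -- the reflection `2 P w - u` of `u` through `P w` also lies in `U`
  have hrefl : ⟪w - P w, -(u - P w)⟫ ≤ 0 := by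
    convert hvi _ (hU u hu _ (hP w).1 (-1)) using 2
    module
  rw [inner_neg_right] at hrefl
  linarith [hvi u hu]

theorem IsProjOn.eq_of_inner_eq_zero (hP : IsProjOn U P) {w p : EuclideanSpace ℝ (Fin n)}
    (hp : p ∈ U) (h : ∀ u ∈ U, ⟪w - p, u - p⟫ = 0) : P w = p := by
  have hpyth := norm_sub_sq_eq_of_inner_eq_zero (h (P w) (hP w).1)
  have hle := pow_le_pow_left₀ (norm_nonneg _) ((hP w).2 p hp) 2
  rw [← sub_eq_zero, ← norm_eq_zero, ← sq_eq_zero_iff]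
  nlinarith [sq_nonneg ‖P w - p‖]

theorem norm_proj_sub_sq_add_norm_sub_sq_le
    {T : EuclideanSpace ℝ (Fin n) → EuclideanSpace ℝ (Fin n)} (hT : FirmlyNonexpansive T)
    (hU : ∀ x ∈ U, ∀ y ∈ U, ∀ t : ℝ, t • x + (1 - t) • y ∈ U) (hP : IsProjOn U P)
    (x : EuclideanSpace ℝ (Fin n)) {z : EuclideanSpace ℝ (Fin n)} (hzT : T z = z) (hzU : z ∈ U) :
    ‖P (T x) - z‖ ^ 2 + ‖x - T x‖ ^ 2 ≤ ‖x - z‖ ^ 2 := by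
  have hpyth := norm_sub_sq_eq_of_inner_eq_zero (hP.inner_eq_zero hU (T x) hzU)
  have hfne := hT.norm_sub_sq_add_norm_sub_sq_le x hzT
  rw [norm_sub_rev z] at hpyth
  nlinarith [sq_nonneg ‖T x - P (T x)‖]

theorem norm_circumcenter_sub_le_norm_proj_sub
    {T R RU : EuclideanSpace ℝ (Fin n) → EuclideanSpace ℝ (Fin n)} (hT : FirmlyNonexpansive T)
    (hU : ∀ x ∈ U, ∀ y ∈ U, ∀ t : ℝ, t • x + (1 - t) • y ∈ U) (hP : IsProjOn U P)
    (hR : ∀ w, R w = (2 : ℝ) • T w - w) (hRU : ∀ w, RU w = (2 : ℝ) • P w - w)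
    {x c z : EuclideanSpace ℝ (Fin n)} (hx : x ∈ U)
    (hspan : c ∈ affineSpan ℝ ({x, R x, RU (R x)} : Set (EuclideanSpace ℝ (Fin n))))
    (h₁ : ‖c - x‖ = ‖c - R x‖) (h₂ : ‖c - x‖ = ‖c - RU (R x)‖) (hzT : T z = z) (hzU : z ∈ U) :
    ‖c - z‖ ≤ ‖P (T x) - z‖ := by
  set m := P (R x)
  have hmU : m ∈ U := (hP _).1
  have hae : ⟪x - m, R x - m⟫ = 0 := by rw [real_inner_comm]; exact hP.inner_eq_zero hU _ hx
  have hez : ⟪R x - m, z - m⟫ = 0 := hP.inner_eq_zero hU _ hzU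
  have hTx : T x = m + (1 / 2 : ℝ) • ((x - m) + (R x - m)) := by rw [hR]; module
  have hSx : P (T x) = m + (1 / 2 : ℝ) • (x - m) := by
    refine hP.eq_of_inner_eq_zero ?_ fun u hu => ?_
    · convert hU x hx m hmU (1 / 2) using 1; module
    · rw [hTx, show m + (1 / 2 : ℝ) • ((x - m) + (R x - m)) - (m + (1 / 2 : ℝ) • (x - m)) =
          (1 / 2 : ℝ) • (R x - m) by module,
        show u - (m + (1 / 2 : ℝ) • (x - m)) = (u - m) - (1 / 2 : ℝ) • (x - m) by module,
        real_inner_smul_left, inner_sub_right, real_inner_smul_right,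
        hP.inner_eq_zero hU _ hu, real_inner_comm, hae]
      ring
  obtain ⟨τ, rfl, hτ⟩ :
      ∃ τ : ℝ, c = m + τ • (x - m) ∧ (1 - 2 * τ) * ‖x - m‖ ^ 2 = ‖R x - m‖ ^ 2 := by
    have hRRx : m - (R x - m) = RU (R x) := by rw [hRU]; module
    have := exists_eq_add_smul_of_mem_affineSpan_of_equidistant (m := m) (c := c) hae
    rw [add_sub_cancel, add_sub_cancel, hRRx] at this
    exact this hspan h₁ h₂
  have hfne := hT.inner_sub_nonpos x hzT
  refine norm_sub_le_norm_sub_of_inner_nonpos ?_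
  rw [hTx, show x - (m + (1 / 2 : ℝ) • ((x - m) + (R x - m))) =
      (1 / 2 : ℝ) • ((x - m) - (R x - m)) by module,
    show z - (m + (1 / 2 : ℝ) • ((x - m) + (R x - m))) =
      (z - m) - (1 / 2 : ℝ) • ((x - m) + (R x - m)) by module] at hfne
  rw [hSx, show m + (1 / 2 : ℝ) • (x - m) - (m + τ • (x - m)) = (1 / 2 - τ) • (x - m) by module,
    show z - (m + τ • (x - m)) = (z - m) - τ • (x - m) by module]
  exact inner_smul_sub_smul_nonpos hae hez hτ hfne

end Euclidean

theorem crm_map_linear_rate_general {n : ℕ}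
    (T : EuclideanSpace ℝ (Fin n) → EuclideanSpace ℝ (Fin n))
    (hT : FirmlyNonexpansive T)
    (U : Set (EuclideanSpace ℝ (Fin n)))
    (hUaff : ∀ x ∈ U, ∀ y ∈ U, ∀ t : ℝ, t • x + (1 - t) • y ∈ U)
    (PU : EuclideanSpace ℝ (Fin n) → EuclideanSpace ℝ (Fin n))
    (hPU : IsProjOn U PU)
    (R RU : EuclideanSpace ℝ (Fin n) → EuclideanSpace ℝ (Fin n))
    (hR : ∀ w, R w = (2 : ℝ) • T w - w) (hRU : ∀ w, RU w = (2 : ℝ) • PU w - w)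
    (hfix : ∃ y, T y = y ∧ y ∈ U)
    (ω : ℝ) (hω : ω ∈ Set.Ioc (0 : ℝ) 1)
    (hEB : ∀ x ∈ U,
      ω * Metric.infDist x {w : EuclideanSpace ℝ (Fin n) | T w = w ∧ w ∈ U} ≤ ‖x - T x‖)
    (x c : EuclideanSpace ℝ (Fin n)) (hx : x ∈ U)
    (hspan : c ∈ affineSpan ℝ ({x, R x, RU (R x)} : Set (EuclideanSpace ℝ (Fin n))))
    (h1 : ‖c - x‖ = ‖c - R x‖) (h2 : ‖c - x‖ = ‖c - RU (R x)‖) :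
    Metric.infDist c {w : EuclideanSpace ℝ (Fin n) | T w = w ∧ w ∈ U} ^ 2 ≤
        Metric.infDist (PU (T x)) {w : EuclideanSpace ℝ (Fin n) | T w = w ∧ w ∈ U} ^ 2 ∧
      Metric.infDist (PU (T x)) {w : EuclideanSpace ℝ (Fin n) | T w = w ∧ w ∈ U} ^ 2 ≤
        (1 - ω ^ 2) *
          Metric.infDist x {w : EuclideanSpace ℝ (Fin n) | T w = w ∧ w ∈ U} ^ 2 := by
  set F := {w : EuclideanSpace ℝ (Fin n) | T w = w ∧ w ∈ U}
  refine ⟨pow_le_pow_left₀ infDist_nonneg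
    (infDist_le_infDist_of_forall_dist_le fun z hz => ?_) 2, ?_⟩
  · simpa only [dist_eq_norm] using
      norm_circumcenter_sub_le_norm_proj_sub hT hUaff hPU hR hRU hx hspan h1 h2 hz.1 hz.2
  have hmap : infDist (PU (T x)) F ^ 2 + ‖x - T x‖ ^ 2 ≤ infDist x F ^ 2 :=
    infDist_sq_add_sq_le hfix fun z ⟨hzT, hzU⟩ => by
      simpa only [dist_eq_norm] using
        norm_proj_sub_sq_add_norm_sub_sq_le hT hUaff hPU x hzT hzU
  have hEB' : (ω * infDist x F) ^ 2 ≤ ‖x - T x‖ ^ 2 :=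
    pow_le_pow_left₀ (mul_nonneg hω.1.le infDist_nonneg) (hEB x hx) 2
  linarith [mul_pow ω (infDist x F) 2]

/-- Under the error bound EB with constant `ω ∈ (0, 1]`, one step of CRM (any
circumcenter `c` of `x`, `R(x)`, `R_U(R(x))` for `x ∈ U`) and one step of MAP
(`S(x) = P_U(T(x))`) satisfy
`dist(c, Fix)² ≤ dist(S(x), Fix)² ≤ (1 − ω²)·dist(x, Fix)²`. -/
theorem crm_map_linear_rate {n : ℕ}
    (T : EuclideanSpace ℝ (Fin n) → EuclideanSpace ℝ (Fin n))
    (hT : FirmlyNonexpansive T)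
    (U : Set (EuclideanSpace ℝ (Fin n))) (hUne : U.Nonempty)
    (hUaff : ∀ x ∈ U, ∀ y ∈ U, ∀ t : ℝ, t • x + (1 - t) • y ∈ U)
    (PU : EuclideanSpace ℝ (Fin n) → EuclideanSpace ℝ (Fin n))
    (hPU : IsProjOn U PU)
    (R RU : EuclideanSpace ℝ (Fin n) → EuclideanSpace ℝ (Fin n))
    (hR : ∀ w, R w = (2 : ℝ) • T w - w) (hRU : ∀ w, RU w = (2 : ℝ) • PU w - w)
    (hfix : ∃ y, T y = y ∧ y ∈ U)
    (ω : ℝ) (hω : ω ∈ Set.Ioc (0 : ℝ) 1)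
    (hEB : ∀ x ∈ U,
      ω * Metric.infDist x {w : EuclideanSpace ℝ (Fin n) | T w = w ∧ w ∈ U} ≤ ‖x - T x‖)
    (x c : EuclideanSpace ℝ (Fin n)) (hx : x ∈ U)
    (hspan : c ∈ affineSpan ℝ ({x, R x, RU (R x)} : Set (EuclideanSpace ℝ (Fin n))))
    (h1 : ‖c - x‖ = ‖c - R x‖) (h2 : ‖c - x‖ = ‖c - RU (R x)‖) :
    Metric.infDist c {w : EuclideanSpace ℝ (Fin n) | T w = w ∧ w ∈ U} ^ 2 ≤
        Metric.infDist (PU (T x)) {w : EuclideanSpace ℝ (Fin n) | T w = w ∧ w ∈ U} ^ 2 ∧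
      Metric.infDist (PU (T x)) {w : EuclideanSpace ℝ (Fin n) | T w = w ∧ w ∈ U} ^ 2 ≤
        (1 - ω ^ 2) *
          Metric.infDist x {w : EuclideanSpace ℝ (Fin n) | T w = w ∧ w ∈ U} ^ 2 :=
  crm_map_linear_rate_general T hT U hUaff PU hPU R RU hR hRU hfix ω hω hEB x c hx hspan h1 h2
end
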